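/- arXiv:1112.3304 — 5 statements merged into one kernel-verified Lean document; each statement's English description precedes it below -/
import Mathlib

section
/- For every s with 0 ≤ s < 1/3, there is no avoidance coupling of two s-lazy walkers on the looped three-vertex complete graph K_3^*. -/
open MeasureTheory ProbabilityTheory

/-- `X` is a faithful `s`-lazy walk on the looped complete graph `K_3^*`: at
each step it stays put with probability `s` and moves to each of the other two
vertices with probability `(1 - s)/2`. -/
def IsLazyWalk3 {Ω : Type} [MeasurableSpace Ω] (μ : Measure Ω) (s : ℝ)
    (X : ℕ → Ω → Fin 3) : Prop :=
  ∀ (t : ℕ) (v : ℕ → Fin 3),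
    μ {ω | ∀ u ≤ t + 1, X u ω = v u} =
      μ {ω | ∀ u ≤ t, X u ω = v u} *
        ENNReal.ofReal (if v (t + 1) = v t then s else (1 - s) / 2)

/-- The two walkers `X` (moving first in each round) and `Y` almost surely
never collide: for every `t`, `X t ≠ Y t` and `X (t+1) ≠ Y t`. -/
def AvoidsPairAE {Ω : Type} [MeasurableSpace Ω] (μ : Measure Ω)
    (X Y : ℕ → Ω → Fin 3) : Prop :=
  ∀ᵐ ω ∂μ, ∀ t : ℕ, X t ω ≠ Y t ω ∧ X (t + 1) ω ≠ Y t ω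

/-- The coupling of the two walkers `X, Y` (moving alternately in the order
`X 0, Y 0, X 1, Y 1, …`) is Markovian: there are transition rules `f, g` such
that conditionally on the history, `X (t+1)` is distributed as `f (X t, Y t)`
and `Y (t+1)` is distributed as `g (X (t+1), Y t)`. -/
def IsMarkovianPair {Ω : Type} [MeasurableSpace Ω] (μ : Measure Ω)
    (X Y : ℕ → Ω → Fin 3) : Prop :=
  ∃ f g : Fin 3 × Fin 3 → PMF (Fin 3),
    (∀ (t : ℕ) (v u : ℕ → Fin 3) (w : Fin 3),
      μ {ω | (∀ r ≤ t, X r ω = v r ∧ Y r ω = u r) ∧ X (t + 1) ω = w} =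
        μ {ω | ∀ r ≤ t, X r ω = v r ∧ Y r ω = u r} * f (v t, u t) w) ∧
    (∀ (t : ℕ) (v u : ℕ → Fin 3) (x w : Fin 3),
      μ {ω | ((∀ r ≤ t, X r ω = v r ∧ Y r ω = u r) ∧ X (t + 1) ω = x) ∧
             Y (t + 1) ω = w} =
        μ {ω | (∀ r ≤ t, X r ω = v r ∧ Y r ω = u r) ∧ X (t + 1) ω = x} *
          g (x, u t) w)

/-!
Avoidance forces `Y t - X t ∈ {1, 2}`, the orientation of the pair at time `t`. The overlap at
time `t` is the sum, over the histories `p` of `X` up to time `t`, of the smaller of the masses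
that the two orientations carry on `{X|[0,t] = p}`; it lies in `[0, 1]`.

Given its history, `X` steps from `a` to `a + d`, `d = 1, 2`, with probability `(1 - s)/2` each,
and then `Y t`, avoiding both, must be `a - d`. So on the cell of `p` each orientation carries,
besides its mass on the sub-cell where `X` stays, a mass `(1 - s)/2 · μ(cell)` coming from a step
of `X`. At time `t + 1`, a sub-cell where `X` stepped has overlap at most its mass on which `Y`
stays put, and the sub-cell where `X` stayed has overlap at most that mass plus its old overlap,
since a move of `Y` there just flips the orientation. As `Y` stays put with probability `s`, the
overlap drops by at least `(1 - s)/2 - s = (1 - 3s)/2 > 0` in every round, which is impossible.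
-/

open scoped ENNReal

theorem add_nsmul_le_of_succ_add_le {α : Type*} [AddCommMonoid α] [PartialOrder α]
    [IsOrderedAddMonoid α] {f : ℕ → α} {c d : α} (h : ∀ n, f (n + 1) + c ≤ f n + d) (n : ℕ) :
    f n + n • c ≤ f 0 + n • d := by
  induction n with
  | zero => simp
  | succ n ih =>
    calc f (n + 1) + (n + 1) • c = (f (n + 1) + c) + n • c := by rw [succ_nsmul]; abel
      _ ≤ (f n + d) + n • c := add_le_add_left (h n) _
      _ = (f n + n • c) + d := add_right_comm _ _ _
      _ ≤ (f 0 + n • d) + d := add_le_add_left ih _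
      _ = f 0 + (n + 1) • d := by rw [succ_nsmul, add_assoc]

theorem Fin.sum_univ_three_rotate {M : Type*} [AddCommMonoid M] (f : Fin 3 → M) (a : Fin 3) :
    ∑ w, f w = f a + f (a + 1) + f (a + 2) := by
  rw [← Equiv.sum_comp (Equiv.addLeft a), Fin.sum_univ_three]
  simp

namespace MeasureTheory

theorem sum_measure_preimage_singleton_inter {Ω β : Type*} [MeasurableSpace Ω] [Fintype β]
    [MeasurableSpace β] [MeasurableSingletonClass β] {μ : Measure Ω} {f : Ω → β}
    (hf : Measurable f) (E : Set Ω) : ∑ b, μ (f ⁻¹' {b} ∩ E) = μ E := by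
  have := sum_measure_preimage_singleton (μ := μ.restrict E) Finset.univ
    fun b _ => hf (measurableSet_singleton b)
  simpa [Measure.restrict_apply (hf (measurableSet_singleton _))] using this

end MeasureTheory

section History

variable {Ω α : Type*}

def stays (X : ℕ → Ω → α) (t : ℕ) : Set Ω := {ω | X (t + 1) ω = X t ω}

def history (X : ℕ → Ω → α) (t : ℕ) (ω : Ω) : Fin (t + 1) → α := fun u => X u ω

theorem measurable_history [MeasurableSpace Ω] [MeasurableSpace α] {X : ℕ → Ω → α}
    (hX : ∀ t, Measurable (X t)) (t : ℕ) : Measurable (history X t) :=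
  measurable_pi_iff.mpr fun u => hX u

theorem history_succ (X : ℕ → Ω → α) (t : ℕ) (ω : Ω) :
    history X (t + 1) ω = Fin.snoc (history X t ω) (X (t + 1) ω) := by
  ext u
  refine Fin.lastCases ?_ (fun i => ?_) u <;> simp [history]

theorem preimage_history_succ_snoc (X : ℕ → Ω → α) (t : ℕ) (p : Fin (t + 1) → α) (w : α) :
    history X (t + 1) ⁻¹' {Fin.snoc p w} = history X t ⁻¹' {p} ∩ X (t + 1) ⁻¹' {w} := by
  ext ω
  simp [history_succ, Fin.snoc_injective2.eq_iff]

end History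

section LazyWalk

variable {Ω : Type} [MeasurableSpace Ω] {μ : Measure Ω} {s : ℝ} {X : ℕ → Ω → Fin 3}

theorem IsLazyWalk3.measure_history_inter (hX : IsLazyWalk3 μ s X) (t : ℕ)
    (p : Fin (t + 1) → Fin 3) (w : Fin 3) :
    μ (history X t ⁻¹' {p} ∩ X (t + 1) ⁻¹' {w}) =
      μ (history X t ⁻¹' {p}) *
        ENNReal.ofReal (if w = p (Fin.last t) then s else (1 - s) / 2) := by
  set v : ℕ → Fin 3 := fun u => if h : u < t + 1 then p ⟨u, h⟩ else w
  have hcyl : {ω | ∀ u ≤ t, X u ω = v u} = history X t ⁻¹' {p} := by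
    ext ω
    simp only [Set.mem_ofPred_eq, Set.mem_preimage, Set.mem_singleton_iff, history, funext_iff,
      Fin.forall_iff, Nat.lt_succ_iff]
    exact forall₂_congr fun u hu => by simp [v, hu]
  have hcyl_succ : {ω | ∀ u ≤ t + 1, X u ω = v u} =
      history X t ⁻¹' {p} ∩ X (t + 1) ⁻¹' {w} := by
    rw [← hcyl]
    ext ω
    simp [Nat.le_succ_iff, or_imp, forall_and, v]
  have hvt : v t = p (Fin.last t) := by simp [v, Fin.last]
  have hvt_succ : v (t + 1) = w := by simp [v]
  rw [← hcyl_succ, ← hcyl, ← hvt, ← hvt_succ]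
  exact hX t v

theorem sum_measure_preimage_history [IsProbabilityMeasure μ] (hXm : ∀ t, Measurable (X t))
    (t : ℕ) : ∑ p, μ (history X t ⁻¹' {p}) = 1 := by
  simpa using sum_measure_preimage_singleton_inter (μ := μ) (measurable_history hXm t) Set.univ

theorem IsLazyWalk3.measure_stay [IsProbabilityMeasure μ] (hXm : ∀ t, Measurable (X t))
    (hX : IsLazyWalk3 μ s X) (t : ℕ) : μ (stays X t) = ENNReal.ofReal s := by
  have hcell (p : Fin (t + 1) → Fin 3) : history X t ⁻¹' {p} ∩ stays X t =
      history X t ⁻¹' {p} ∩ X (t + 1) ⁻¹' {p (Fin.last t)} := by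
    ext ω
    constructor <;> rintro ⟨rfl, h⟩ <;> exact ⟨rfl, h⟩
  calc μ (stays X t) = ∑ p, μ (history X t ⁻¹' {p} ∩ stays X t) :=
        (sum_measure_preimage_singleton_inter (measurable_history hXm t) _).symm
    _ = ∑ p, μ (history X t ⁻¹' {p}) * ENNReal.ofReal s := by
        simp only [hcell, hX.measure_history_inter, if_true]
    _ = ENNReal.ofReal s := by rw [← Finset.sum_mul, sum_measure_preimage_history hXm, one_mul]

end LazyWalk

section Avoidance

variable {Ω : Type} [MeasurableSpace Ω] {μ : Measure Ω} {X Y : ℕ → Ω → Fin 3}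

def aheadBy (X Y : ℕ → Ω → Fin 3) (t : ℕ) (e : Fin 3) : Set Ω := {ω | Y t ω = X t ω + e}

theorem AvoidsPairAE.measure_mono (hAv : AvoidsPairAE μ X Y) (t : ℕ) {A B : Set Ω}
    (h : ∀ ω ∈ A, X t ω ≠ Y t ω → X (t + 1) ω ≠ Y t ω → X (t + 1) ω ≠ Y (t + 1) ω → ω ∈ B) :
    μ A ≤ μ B :=
  measure_mono_ae <| hAv.mono fun ω hω hA => h ω hA (hω t).1 (hω t).2 (hω (t + 1)).1

theorem AvoidsPairAE.min_aheadBy_succ_le_of_stay (hAv : AvoidsPairAE μ X Y) {t : ℕ} {C : Set Ω}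
    (hC : ∀ ω ∈ C, X (t + 1) ω = X t ω) :
    min (μ (C ∩ aheadBy X Y (t + 1) 1)) (μ (C ∩ aheadBy X Y (t + 1) 2)) ≤
      μ (C ∩ stays Y t) + min (μ (C ∩ aheadBy X Y t 1)) (μ (C ∩ aheadBy X Y t 2)) := by
  have hflip₁ : μ (C ∩ aheadBy X Y (t + 1) 1) ≤ μ (C ∩ stays Y t) + μ (C ∩ aheadBy X Y t 2) :=
    (hAv.measure_mono t (B := C ∩ stays Y t ∪ C ∩ aheadBy X Y t 2) fun ω hω h₁ h₂ h₃ => by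
      have := hC ω hω.1; simp_all [aheadBy, stays]; grind).trans (measure_union_le _ _)
  have hflip₂ : μ (C ∩ aheadBy X Y (t + 1) 2) ≤ μ (C ∩ stays Y t) + μ (C ∩ aheadBy X Y t 1) :=
    (hAv.measure_mono t (B := C ∩ stays Y t ∪ C ∩ aheadBy X Y t 1) fun ω hω h₁ h₂ h₃ => by
      have := hC ω hω.1; simp_all [aheadBy, stays]; grind).trans (measure_union_le _ _)
  calc _ ≤ min (μ (C ∩ stays Y t) + μ (C ∩ aheadBy X Y t 2))
          (μ (C ∩ stays Y t) + μ (C ∩ aheadBy X Y t 1)) := min_le_min hflip₁ hflip₂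
    _ = _ := by rw [min_add_add_left, min_comm (μ (C ∩ aheadBy X Y t 2))]

theorem AvoidsPairAE.measure_aheadBy_succ_le_of_move (hAv : AvoidsPairAE μ X Y) {t : ℕ}
    {d : Fin 3} {C : Set Ω} (hC : ∀ ω ∈ C, X (t + 1) ω = X t ω + d) :
    μ (C ∩ aheadBy X Y (t + 1) d) ≤ μ (C ∩ stays Y t) :=
  hAv.measure_mono t fun ω hω h₁ h₂ h₃ => by
    have := hC ω hω.1; simp_all [aheadBy, stays]; grind

theorem AvoidsPairAE.measure_le_aheadBy_of_move (hAv : AvoidsPairAE μ X Y) {t : ℕ}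
    {d : Fin 3} (hd : d ≠ 0) {C : Set Ω} (hC : ∀ ω ∈ C, X (t + 1) ω = X t ω + d) :
    μ C ≤ μ (C ∩ aheadBy X Y t (-d)) :=
  hAv.measure_mono t fun ω hω h₁ h₂ h₃ => by
    have := hC ω hω; simp_all [aheadBy]; grind

theorem AvoidsPairAE.cell_overlap_succ_add_le (hAv : AvoidsPairAE μ X Y) {t : ℕ}
    (hX : Measurable (X (t + 1))) {P : Set Ω} {a : Fin 3} (hP : ∀ ω ∈ P, X t ω = a) :
    ∑ w, min (μ (P ∩ X (t + 1) ⁻¹' {w} ∩ aheadBy X Y (t + 1) 1))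
        (μ (P ∩ X (t + 1) ⁻¹' {w} ∩ aheadBy X Y (t + 1) 2)) +
      min (μ (P ∩ X (t + 1) ⁻¹' {a + 1})) (μ (P ∩ X (t + 1) ⁻¹' {a + 2})) ≤
    μ (P ∩ stays Y t) + min (μ (P ∩ aheadBy X Y t 1)) (μ (P ∩ aheadBy X Y t 2)) := by
  obtain ⟨C, hC⟩ : ∃ C : Fin 3 → Set Ω, ∀ w, C w = P ∩ X (t + 1) ⁻¹' {w} := ⟨_, fun _ => rfl⟩
  simp only [← hC]
  have hsplit (F : Set Ω) : ∑ w, μ (C w ∩ F) = μ (P ∩ F) := by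
    refine (Finset.sum_congr rfl fun w _ => ?_).trans (sum_measure_preimage_singleton_inter hX _)
    rw [hC, Set.inter_comm P (X (t + 1) ⁻¹' {w}), Set.inter_assoc]
  have hstep (d : Fin 3) : ∀ ω ∈ C (a + d), X (t + 1) ω = X t ω + d := fun ω hω => by
    rw [hC] at hω; rw [hω.2, hP ω hω.1]
  set D₁ := aheadBy X Y t 1
  set D₂ := aheadBy X Y t 2
  calc _ = min (μ (C a ∩ aheadBy X Y (t + 1) 1)) (μ (C a ∩ aheadBy X Y (t + 1) 2)) +
          min (μ (C (a + 1) ∩ aheadBy X Y (t + 1) 1)) (μ (C (a + 1) ∩ aheadBy X Y (t + 1) 2)) +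
          min (μ (C (a + 2) ∩ aheadBy X Y (t + 1) 1)) (μ (C (a + 2) ∩ aheadBy X Y (t + 1) 2)) +
          min (μ (C (a + 1))) (μ (C (a + 2))) := by
        rw [Fin.sum_univ_three_rotate (fun w => min (μ (C w ∩ aheadBy X Y (t + 1) 1))
          (μ (C w ∩ aheadBy X Y (t + 1) 2))) a]
    _ ≤ (μ (C a ∩ stays Y t) + min (μ (C a ∩ D₁)) (μ (C a ∩ D₂))) +
          μ (C (a + 1) ∩ stays Y t) + μ (C (a + 2) ∩ stays Y t) +
          min (μ (C (a + 2) ∩ D₁)) (μ (C (a + 1) ∩ D₂)) := by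
      rw [min_comm (μ (C (a + 1)))]
      gcongr ?_ + ?_ + ?_ + min ?_ ?_
      · exact hAv.min_aheadBy_succ_le_of_stay (by simpa using hstep 0)
      · exact (min_le_left _ _).trans (hAv.measure_aheadBy_succ_le_of_move (hstep 1))
      · exact (min_le_right _ _).trans (hAv.measure_aheadBy_succ_le_of_move (hstep 2))
      · exact hAv.measure_le_aheadBy_of_move (by decide) (hstep 2)
      · exact hAv.measure_le_aheadBy_of_move (by decide) (hstep 1)
    _ = μ (P ∩ stays Y t) +
          (min (μ (C a ∩ D₁)) (μ (C a ∩ D₂)) + min (μ (C (a + 2) ∩ D₁)) (μ (C (a + 1) ∩ D₂))) := by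
        rw [← hsplit, Fin.sum_univ_three_rotate (fun w => μ (C w ∩ stays Y t)) a]; ring
    _ ≤ μ (P ∩ stays Y t) + min (μ (P ∩ D₁)) (μ (P ∩ D₂)) := by
        grw [min_add_min_le_min_add_add, ← hsplit D₁, ← hsplit D₂,
          Fin.sum_univ_three_rotate (fun w => μ (C w ∩ D₁)) a,
          Fin.sum_univ_three_rotate (fun w => μ (C w ∩ D₂)) a]
        gcongr _ + min (?_ + _) ?_ <;> exact le_self_add

end Avoidance

section Overlap

variable {Ω : Type} [MeasurableSpace Ω] {μ : Measure Ω} {s : ℝ} {X Y : ℕ → Ω → Fin 3}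

noncomputable def overlap (μ : Measure Ω) (X Y : ℕ → Ω → Fin 3) (t : ℕ) : ℝ≥0∞ :=
  ∑ p, min (μ (history X t ⁻¹' {p} ∩ aheadBy X Y t 1)) (μ (history X t ⁻¹' {p} ∩ aheadBy X Y t 2))

theorem overlap_le_one [IsProbabilityMeasure μ] (hXm : ∀ t, Measurable (X t)) (t : ℕ) :
    overlap μ X Y t ≤ 1 :=
  calc overlap μ X Y t ≤ ∑ p, μ (history X t ⁻¹' {p}) :=
        Finset.sum_le_sum fun _ _ => (min_le_left _ _).trans (measure_mono Set.inter_subset_left)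
    _ = 1 := sum_measure_preimage_history hXm t

theorem overlap_succ_eq (X Y : ℕ → Ω → Fin 3) (t : ℕ) :
    overlap μ X Y (t + 1) = ∑ p, ∑ w,
      min (μ (history X t ⁻¹' {p} ∩ X (t + 1) ⁻¹' {w} ∩ aheadBy X Y (t + 1) 1))
        (μ (history X t ⁻¹' {p} ∩ X (t + 1) ⁻¹' {w} ∩ aheadBy X Y (t + 1) 2)) := by
  rw [overlap, ← Equiv.sum_comp (Fin.snocEquiv _), Fintype.sum_prod_type, Finset.sum_comm]
  simp only [Fin.snocEquiv, Equiv.coe_fn_mk, preimage_history_succ_snoc]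

theorem overlap_succ_add_le [IsProbabilityMeasure μ] (hXm : ∀ t, Measurable (X t))
    (hYm : ∀ t, Measurable (Y t)) (hX : IsLazyWalk3 μ s X) (hY : IsLazyWalk3 μ s Y)
    (hAv : AvoidsPairAE μ X Y) (t : ℕ) :
    overlap μ X Y (t + 1) + ENNReal.ofReal ((1 - s) / 2) ≤
      overlap μ X Y t + ENNReal.ofReal s := by
  have hcell (p : Fin (t + 1) → Fin 3) := hAv.cell_overlap_succ_add_le (hXm (t + 1))
    (P := history X t ⁻¹' {p}) (a := p (Fin.last t)) fun ω hω => by rw [← hω]; rfl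
  simp only [hX.measure_history_inter, add_eq_left, one_ne_zero, Fin.reduceEq, if_false,
    min_self] at hcell
  calc overlap μ X Y (t + 1) + ENNReal.ofReal ((1 - s) / 2)
      = ∑ p, (∑ w,
          min (μ (history X t ⁻¹' {p} ∩ X (t + 1) ⁻¹' {w} ∩ aheadBy X Y (t + 1) 1))
            (μ (history X t ⁻¹' {p} ∩ X (t + 1) ⁻¹' {w} ∩ aheadBy X Y (t + 1) 2)) +
          μ (history X t ⁻¹' {p}) * ENNReal.ofReal ((1 - s) / 2)) := by
        rw [overlap_succ_eq, Finset.sum_add_distrib, ← Finset.sum_mul,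
          sum_measure_preimage_history hXm, one_mul]
    _ ≤ ∑ p, (μ (history X t ⁻¹' {p} ∩ stays Y t) +
          min (μ (history X t ⁻¹' {p} ∩ aheadBy X Y t 1))
            (μ (history X t ⁻¹' {p} ∩ aheadBy X Y t 2))) :=
        Finset.sum_le_sum fun p _ => hcell p
    _ = overlap μ X Y t + ENNReal.ofReal s := by
        rw [Finset.sum_add_distrib, sum_measure_preimage_singleton_inter (measurable_history hXm t),
          hY.measure_stay hYm, overlap, add_comm]

theorem nsmul_le_of_avoidsPairAE [IsProbabilityMeasure μ] (hXm : ∀ t, Measurable (X t))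
    (hYm : ∀ t, Measurable (Y t)) (hX : IsLazyWalk3 μ s X) (hY : IsLazyWalk3 μ s Y)
    (hAv : AvoidsPairAE μ X Y) (n : ℕ) :
    n • ENNReal.ofReal ((1 - s) / 2) ≤ 1 + n • ENNReal.ofReal s :=
  calc n • ENNReal.ofReal ((1 - s) / 2)
      ≤ overlap μ X Y n + n • ENNReal.ofReal ((1 - s) / 2) := le_add_self
    _ ≤ overlap μ X Y 0 + n • ENNReal.ofReal s :=
        add_nsmul_le_of_succ_add_le (overlap_succ_add_le hXm hYm hX hY hAv) n
    _ ≤ 1 + n • ENNReal.ofReal s := by gcongr; exact overlap_le_one hXm 0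

end Overlap

/-- For every `s` with `0 ≤ s < 1/3`, there is no avoidance coupling of two
`s`-lazy walkers on the looped three-vertex complete graph `K_3^*`. -/
theorem no_avoidance_coupling_K3star (s : ℝ) (hs : 0 ≤ s) (hs1 : s < 1 / 3) :
    ¬ ∃ (Ω : Type) (_ : MeasurableSpace Ω) (μ : Measure Ω) (X Y : ℕ → Ω → Fin 3),
      IsProbabilityMeasure μ ∧ (∀ t, Measurable (X t)) ∧ (∀ t, Measurable (Y t)) ∧
      IsLazyWalk3 μ s X ∧ IsLazyWalk3 μ s Y ∧ AvoidsPairAE μ X Y := by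
  rintro ⟨Ω, _, μ, X, Y, _, hXm, hYm, hX, hY, hAv⟩
  obtain ⟨n, hn⟩ := exists_nat_gt (2 / (1 - 3 * s))
  have key := nsmul_le_of_avoidsPairAE hXm hYm hX hY hAv n
  rw [← ENNReal.ofReal_nsmul, ← ENNReal.ofReal_nsmul, ← ENNReal.ofReal_one,
    ← ENNReal.ofReal_add zero_le_one (nsmul_nonneg hs n),
    ENNReal.ofReal_le_ofReal_iff (add_nonneg zero_le_one (nsmul_nonneg hs n)), nsmul_eq_mul,
    nsmul_eq_mul] at key
  rw [div_lt_iff₀ (by linarith)] at hn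
  linarith
end

section
/- If there exists an avoidance coupling of k walkers on the looped complete graph K_n^*, then there exists an avoidance coupling of k walkers on the looped complete graph K_{n+1}^*. -/
open MeasureTheory ProbabilityTheory

/-- `X` is a faithful simple random walk on the loopless complete graph `K_n`:
at each step the walker moves to a uniformly random vertex other than its
current one. -/
def IsWalkLoopless {Ω : Type} [MeasurableSpace Ω] (μ : Measure Ω) {n : ℕ}
    (X : ℕ → Ω → Fin n) : Prop :=
  ∀ (t : ℕ) (v : ℕ → Fin n),
    μ {ω | ∀ s ≤ t + 1, X s ω = v s} =
      μ {ω | ∀ s ≤ t, X s ω = v s} *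
        (if v (t + 1) = v t then 0 else ((n - 1 : ℕ) : ENNReal)⁻¹)

/-- `X` is a faithful simple random walk on the looped complete graph `K_n^*`:
at each step the walker moves to a uniformly random vertex (possibly its
current one). -/
def IsWalkLooped {Ω : Type} [MeasurableSpace Ω] (μ : Measure Ω) {n : ℕ}
    (X : ℕ → Ω → Fin n) : Prop :=
  ∀ (t : ℕ) (v : ℕ → Fin n),
    μ {ω | ∀ s ≤ t + 1, X s ω = v s} =
      μ {ω | ∀ s ≤ t, X s ω = v s} * ((n : ℕ) : ENNReal)⁻¹

/-- The `k` walkers `X 0, …, X (k-1)`, moving in turn in cyclic order, almost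
surely never collide: initially their positions are pairwise distinct, and
whenever a walker moves it never lands on the current position of another
walker (walkers `i < j` having already made their move number `t+1`, walkers
`i > j` still sitting at their position at time `t`). -/
def AvoidsAE {Ω : Type} [MeasurableSpace Ω] (μ : Measure Ω) {n k : ℕ}
    (X : Fin k → ℕ → Ω → Fin n) : Prop :=
  ∀ᵐ ω ∂μ,
    (∀ i j : Fin k, i ≠ j → X i 0 ω ≠ X j 0 ω) ∧
    (∀ (t : ℕ) (i j : Fin k),
      (i < j → X j (t + 1) ω ≠ X i (t + 1) ω) ∧
      (j < i → X j (t + 1) ω ≠ X i t ω))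

/-- The coupling is Markovian: there are transition rules `f j` so that for
every walker `j` and time `t`, conditionally on the whole history (all
positions up to time `t`, together with the moves at time `t+1` of the walkers
`i < j` preceding `j` in the current round), the next position `X j (t+1)` is
distributed according to `f j` applied to the current configuration. -/
def IsMarkovianCoupling {Ω : Type} [MeasurableSpace Ω] (μ : Measure Ω) {n k : ℕ}
    (X : Fin k → ℕ → Ω → Fin n) : Prop :=
  ∃ f : Fin k → (Fin k → Fin n) → PMF (Fin n),
    ∀ (t : ℕ) (j : Fin k) (v : Fin k → ℕ → Fin n) (w : Fin n),
      μ {ω | ((∀ i : Fin k, ∀ s ≤ t, X i s ω = v i s) ∧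
              (∀ i < j, X i (t + 1) ω = v i (t + 1))) ∧ X j (t + 1) ω = w} =
        μ {ω | (∀ i : Fin k, ∀ s ≤ t, X i s ω = v i s) ∧
               (∀ i < j, X i (t + 1) ω = v i (t + 1))} *
          f j (fun i => if i < j then v i (t + 1) else v i t) w

/-- There is an avoidance coupling of `k` walkers on the loopless complete
graph `K_n`. -/
def AvoidanceCouplingLoopless (n k : ℕ) : Prop :=
  ∃ (Ω : Type) (_ : MeasurableSpace Ω) (μ : Measure Ω)
    (X : Fin k → ℕ → Ω → Fin n),
      IsProbabilityMeasure μ ∧ (∀ j t, Measurable (X j t)) ∧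
      (∀ j, IsWalkLoopless μ (X j)) ∧ AvoidsAE μ X

/-- There is an avoidance coupling of `k` walkers on the looped complete
graph `K_n^*`. -/
def AvoidanceCouplingLooped (n k : ℕ) : Prop :=
  ∃ (Ω : Type) (_ : MeasurableSpace Ω) (μ : Measure Ω)
    (X : Fin k → ℕ → Ω → Fin n),
      IsProbabilityMeasure μ ∧ (∀ j t, Measurable (X j t)) ∧
      (∀ j, IsWalkLooped μ (X j)) ∧ AvoidsAE μ X

/-- There is a Markovian avoidance coupling of `k` walkers on `K_n`. -/
def MarkovianAvoidanceCouplingLoopless (n k : ℕ) : Prop :=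
  ∃ (Ω : Type) (_ : MeasurableSpace Ω) (μ : Measure Ω)
    (X : Fin k → ℕ → Ω → Fin n),
      IsProbabilityMeasure μ ∧ (∀ j t, Measurable (X j t)) ∧
      (∀ j, IsWalkLoopless μ (X j)) ∧ AvoidsAE μ X ∧ IsMarkovianCoupling μ X

/-- There is a Markovian avoidance coupling of `k` walkers on `K_n^*`. -/
def MarkovianAvoidanceCouplingLooped (n k : ℕ) : Prop :=
  ∃ (Ω : Type) (_ : MeasurableSpace Ω) (μ : Measure Ω)
    (X : Fin k → ℕ → Ω → Fin n),
      IsProbabilityMeasure μ ∧ (∀ j t, Measurable (X j t)) ∧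
      (∀ j, IsWalkLooped μ (X j)) ∧ AvoidsAE μ X ∧ IsMarkovianCoupling μ X


/-!
The walkers of the coupling on `K_n^*` keep their moves, but are read through a random relabelling
`π_t` of `Fin (n + 1)` driven by an independent i.i.d. uniform sequence `c`: walker `j` sits at
`π_t (X j t)`, and the *hole* `π_t (last n)` is the one vertex missed by the image of `Fin n`.
Between two rounds the hole jumps to `c (t + 1)` and the vertex found there moves into the old hole,
`π_{t+1} = swap (π_t (last n)) (c (t + 1)) * π_t`. Since `π_{t+1} a ≠ π_t b` for `a ≠ b` in
`Fin n`, no collision is created. For every state `π`, the map `(a, e) ↦ swap (π (last n)) e (π a)`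
on `Fin n × Fin (n + 1)` takes every value exactly `n` times, so a uniform step of `X` together
with a uniform `c (t + 1)` is a uniform step on `Fin (n + 1)`, independent of the past.
-/

open scoped ENNReal

theorem Set.preimage_image_eq_of_forall {α β : Type*} {f : α → β} {A : Set α}
    (h : ∀ p ∈ A, ∀ q, f p = f q → q ∈ A) : f ⁻¹' (f '' A) = A :=
  Set.Subset.antisymm (fun _ ⟨p, hp, hq⟩ => h p hp _ hq) (Set.subset_preimage_image f A)

theorem MeasureTheory.measure_preimage_inter_eq_sum {α β : Type*} [MeasurableSpace α]
    (μ : Measure α) {f : α → β} (hf : ∀ b, MeasurableSet (f ⁻¹' {b})) (S : Finset β)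
    (A : Set α) : μ (f ⁻¹' S ∩ A) = ∑ b ∈ S, μ (f ⁻¹' {b} ∩ A) := by
  have hS : MeasurableSet (f ⁻¹' S) := by
    rw [← Finset.set_biUnion_preimage_singleton]
    exact Finset.measurableSet_biUnion S fun b _ => hf b
  simp only [← Measure.restrict_apply hS, ← Measure.restrict_apply (hf _)]
  exact (sum_measure_preimage_singleton S fun b _ => hf b).symm

theorem MeasureTheory.Measure.prod_preimage_prodMap_inter_prod {α β γ δ : Type*}
    [MeasurableSpace α] [MeasurableSpace β] {μ : Measure α} {ν : Measure β} [SFinite ν]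
    [Fintype γ] [Fintype δ] {U : α → γ} {V : β → δ}
    (hU : ∀ u, MeasurableSet (U ⁻¹' {u})) (hV : ∀ v, MeasurableSet (V ⁻¹' {v}))
    {P : Set α} {Q : Set β} {p q : ℝ≥0∞}
    (hP : ∀ u, μ (U ⁻¹' {u} ∩ P) = μ (U ⁻¹' {u}) * p)
    (hQ : ∀ v, ν (V ⁻¹' {v} ∩ Q) = ν (V ⁻¹' {v}) * q) (S : Set (γ × δ)) :
    μ.prod ν (Prod.map U V ⁻¹' S ∩ P ×ˢ Q) = μ.prod ν (Prod.map U V ⁻¹' S) * (p * q) := by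
  classical
  have hfiber (w : γ × δ) : Prod.map U V ⁻¹' {w} = (U ⁻¹' {w.1}) ×ˢ (V ⁻¹' {w.2}) := by
    rw [← Set.singleton_prod_singleton, Set.preimage_prod_map_prod]
  have hUV (w : γ × δ) : MeasurableSet (Prod.map U V ⁻¹' {w}) :=
    hfiber w ▸ (hU w.1).prod (hV w.2)
  rw [← S.coe_toFinset, measure_preimage_inter_eq_sum _ hUV,
    ← Set.inter_univ (Prod.map U V ⁻¹' _), measure_preimage_inter_eq_sum _ hUV, Finset.sum_mul]
  refine Finset.sum_congr rfl fun w _ => ?_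
  rw [hfiber, Set.inter_univ, Set.prod_inter_prod, Measure.prod_prod, Measure.prod_prod, hP, hQ]
  ring

namespace AvoidanceCoupling

open Finset

def history {Ω α : Type*} (Z : ℕ → Ω → α) (t : ℕ) (ω : Ω) : Fin (t + 1) → α :=
  fun i => Z i ω

theorem measurable_history {Ω α : Type*} [MeasurableSpace Ω] [MeasurableSpace α]
    {Z : ℕ → Ω → α} (hZ : ∀ s, Measurable (Z s)) (t : ℕ) : Measurable (history Z t) :=
  measurable_pi_lambda _ fun i => hZ i

theorem _root_.IsWalkLooped.measure_history_inter {Ω : Type} [MeasurableSpace Ω]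
    {μ : Measure Ω} {m : ℕ} {Z : ℕ → Ω → Fin m} (hZ : IsWalkLooped μ Z) (t : ℕ)
    (x : Fin (t + 1) → Fin m) (a : Fin m) :
    μ (history Z t ⁻¹' {x} ∩ Z (t + 1) ⁻¹' {a}) = μ (history Z t ⁻¹' {x}) * (m : ℝ≥0∞)⁻¹ := by
  let v (s : ℕ) : Fin m := if h : s < t + 1 then x ⟨s, h⟩ else a
  have hx : history Z t ⁻¹' {x} = {ω | ∀ s ≤ t, Z s ω = v s} := by
    ext ω
    simp only [Set.mem_preimage, Set.mem_singleton_iff, funext_iff, history]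
    exact ⟨fun h s hs => by simpa [v, hs] using h ⟨s, Nat.lt_succ_of_le hs⟩,
      fun h i => by simpa [v, i.is_le] using h i i.is_le⟩
  have hsucc : {ω | ∀ s ≤ t + 1, Z s ω = v s} =
      {ω | ∀ s ≤ t, Z s ω = v s} ∩ Z (t + 1) ⁻¹' {a} := by
    ext ω
    simp [v, Nat.le_succ_iff, or_imp, forall_and]
  rw [hx, ← hsucc, hZ]

noncomputable def uniformSeq (n : ℕ) : Measure (ℕ → Fin (n + 1)) :=
  Measure.infinitePi fun _ => (PMF.uniformOfFintype (Fin (n + 1))).toMeasure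

instance (n : ℕ) : IsProbabilityMeasure (uniformSeq n) := by
  rw [uniformSeq]; infer_instance

theorem isWalkLooped_uniformSeq (n : ℕ) : IsWalkLooped (uniformSeq n) fun s c => c s := by
  have h (t : ℕ) (v : ℕ → Fin (n + 1)) :
      uniformSeq n {c | ∀ s ≤ t, c s = v s} = ((n + 1 : ℕ) : ℝ≥0∞)⁻¹ ^ (t + 1) := by
    have : {c : ℕ → Fin (n + 1) | ∀ s ≤ t, c s = v s} =
        Set.pi (Finset.range (t + 1) : Set ℕ) fun s => {v s} := by
      ext c; simp
    rw [this, uniformSeq, Measure.infinitePi_pi _ fun _ _ => measurableSet_singleton _]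
    simp [PMF.uniformOfFintype_apply]
  intro t v
  rw [h, h, pow_succ]

variable {n : ℕ}

/-- Only `c 1, c 2, …` are read, so that the histories up to time `t` of the walk and of the
driving sequence have the same length. -/
def relabel (c : ℕ → Fin (n + 1)) : ℕ → Equiv.Perm (Fin (n + 1))
  | 0 => 1
  | t + 1 => Equiv.swap (relabel c t (Fin.last n)) (c (t + 1)) * relabel c t

theorem relabel_congr {c c' : ℕ → Fin (n + 1)} {t : ℕ} (h : ∀ s ≤ t, c s = c' s) :
    relabel c t = relabel c' t := by
  induction t with
  | zero => rfl
  | succ t ih => simp only [relabel, ih fun s hs => h s (by omega), h (t + 1) le_rfl]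

theorem _root_.Equiv.Perm.apply_castSucc_ne_apply_last (σ : Equiv.Perm (Fin (n + 1))) (a : Fin n) :
    σ a.castSucc ≠ σ (Fin.last n) :=
  σ.injective.ne (Fin.castSucc_lt_last a).ne

theorem relabel_succ_apply_ne (c : ℕ → Fin (n + 1)) (t : ℕ) {a b : Fin n} (hab : a ≠ b) :
    relabel c (t + 1) a.castSucc ≠ relabel c t b.castSucc := by
  have ha := Equiv.Perm.apply_castSucc_ne_apply_last (relabel c t) a
  have hb := Equiv.Perm.apply_castSucc_ne_apply_last (relabel c t) b
  have hab' := (relabel c t).injective.ne ((Fin.castSucc_injective n).ne hab)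
  simp only [relabel, Equiv.Perm.mul_apply, Equiv.swap_apply_def]
  grind

theorem card_swap_apply_eq (σ : Equiv.Perm (Fin (n + 1))) (w : Fin (n + 1)) :
    #{p : Fin n × Fin (n + 1) | Equiv.swap (σ (Fin.last n)) p.2 (σ p.1.castSucc) = w} = n := by
  have hy := Equiv.Perm.apply_castSucc_ne_apply_last σ
  -- The hole is hit exactly by the pairs `(a, σ a)`; any other vertex `σ a₀` exactly by the pairs
  -- `(a₀, e)` with `e ≠ σ a₀`.
  by_cases hw : w = σ (Fin.last n)
  · have : ({p : Fin n × Fin (n + 1) | Equiv.swap (σ (Fin.last n)) p.2 (σ p.1.castSucc) = w} :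
        Finset _) = univ.image fun a : Fin n => (a, σ a.castSucc) := by
      ext ⟨a, e⟩
      simp only [mem_univ, true_and, mem_image, Equiv.swap_apply_def, Prod.mk.injEq]
      grind
    rw [this, card_image_of_injective _ fun a b h => congrArg Prod.fst h, card_univ,
      Fintype.card_fin]
  · obtain ⟨a₀, ha₀⟩ : ∃ a₀ : Fin n, σ a₀.castSucc = w := by
      refine ⟨(σ.symm w).castPred fun h => hw ?_, by simp⟩
      rw [← h, Equiv.apply_symm_apply]
    have : ({p : Fin n × Fin (n + 1) | Equiv.swap (σ (Fin.last n)) p.2 (σ p.1.castSucc) = w} :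
        Finset _) = {a₀} ×ˢ univ.erase w := by
      ext ⟨a, e⟩
      have hσw : σ a.castSucc = w ↔ a = a₀ := by
        rw [← ha₀, σ.injective.eq_iff, (Fin.castSucc_injective n).eq_iff]
      simp only [mem_univ, mem_product, mem_singleton, mem_erase, Equiv.swap_apply_def]
      grind
    rw [this, card_product, card_singleton, card_erase_of_mem (mem_univ _), card_univ,
      Fintype.card_fin, one_mul, Nat.add_sub_cancel]

section Lift

variable {Ω : Type} (Z : ℕ → Ω → Fin n)

def lift (s : ℕ) (p : Ω × (ℕ → Fin (n + 1))) : Fin (n + 1) :=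
  relabel p.2 s (Z s p.1).castSucc

def pairHistory (t : ℕ) :
    Ω × (ℕ → Fin (n + 1)) → (Fin (t + 1) → Fin n) × (Fin (t + 1) → Fin (n + 1)) :=
  Prod.map (history Z t) (history (fun s c => c s) t)

def IsHistoryEvent (t : ℕ) (A : Set (Ω × (ℕ → Fin (n + 1)))) : Prop :=
  ∀ p ∈ A, ∀ q, pairHistory Z t p = pairHistory Z t q → q ∈ A

variable {Z}

theorem eq_of_pairHistory_eq {t : ℕ} {p q : Ω × (ℕ → Fin (n + 1))}
    (h : pairHistory Z t p = pairHistory Z t q) {s : ℕ} (hs : s ≤ t) :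
    Z s p.1 = Z s q.1 ∧ p.2 s = q.2 s := by
  simp only [pairHistory, Prod.map, Prod.mk.injEq, funext_iff, history] at h
  exact ⟨h.1 ⟨s, Nat.lt_succ_of_le hs⟩, h.2 ⟨s, Nat.lt_succ_of_le hs⟩⟩

theorem relabel_eq_of_pairHistory_eq {t : ℕ} {p q : Ω × (ℕ → Fin (n + 1))}
    (h : pairHistory Z t p = pairHistory Z t q) : relabel p.2 t = relabel q.2 t :=
  relabel_congr fun _ hs => (eq_of_pairHistory_eq h hs).2

theorem lift_eq_of_pairHistory_eq {t : ℕ} {p q : Ω × (ℕ → Fin (n + 1))}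
    (h : pairHistory Z t p = pairHistory Z t q) {s : ℕ} (hs : s ≤ t) :
    lift Z s p = lift Z s q := by
  rw [lift, lift, (eq_of_pairHistory_eq h hs).1,
    relabel_congr fun r hr => (eq_of_pairHistory_eq h (hr.trans hs)).2]

theorem isHistoryEvent_relabel_eq (t : ℕ) (σ : Equiv.Perm (Fin (n + 1))) :
    IsHistoryEvent Z t {p | relabel p.2 t = σ} :=
  fun _ hp _ h => (relabel_eq_of_pairHistory_eq h).symm.trans hp

theorem isHistoryEvent_lift_eq (t : ℕ) (v : ℕ → Fin (n + 1)) :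
    IsHistoryEvent Z t {p | ∀ s ≤ t, lift Z s p = v s} :=
  fun _ hp _ h s hs => (lift_eq_of_pairHistory_eq h hs).symm.trans (hp s hs)

theorem IsHistoryEvent.measurableSet [MeasurableSpace Ω] (hZ : ∀ s, Measurable (Z s)) {t : ℕ}
    {A : Set (Ω × (ℕ → Fin (n + 1)))} (hA : IsHistoryEvent Z t A) : MeasurableSet A :=
  Set.preimage_image_eq_of_forall hA ▸
    ((measurable_history hZ t).prodMap (measurable_history measurable_pi_apply t))
      (Set.to_countable _).measurableSet

theorem measurable_lift [MeasurableSpace Ω] (hZ : ∀ s, Measurable (Z s)) (s : ℕ) :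
    Measurable (lift Z s) :=
  measurable_to_countable' fun _ => IsHistoryEvent.measurableSet hZ (t := s)
    fun _ hp _ h => (lift_eq_of_pairHistory_eq h le_rfl).symm.trans hp

theorem IsHistoryEvent.measure_inter_prod [MeasurableSpace Ω] {μ : Measure Ω} [SFinite μ]
    (hZ : ∀ s, Measurable (Z s)) (hZw : IsWalkLooped μ Z) {t : ℕ}
    {A : Set (Ω × (ℕ → Fin (n + 1)))} (hA : IsHistoryEvent Z t A) (a : Fin n)
    (e : Fin (n + 1)) :
    μ.prod (uniformSeq n) (A ∩ (Z (t + 1) ⁻¹' {a}) ×ˢ {c | c (t + 1) = e}) =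
      μ.prod (uniformSeq n) A * ((n : ℝ≥0∞)⁻¹ * ((n + 1 : ℕ) : ℝ≥0∞)⁻¹) := by
  rw [← Set.preimage_image_eq_of_forall hA]
  exact Measure.prod_preimage_prodMap_inter_prod
    (fun _ => measurable_history hZ t (measurableSet_singleton _))
    (fun _ => measurable_history measurable_pi_apply t (measurableSet_singleton _))
    (hZw.measure_history_inter t · a) ((isWalkLooped_uniformSeq n).measure_history_inter t · e) _

theorem IsHistoryEvent.measure_inter_lift_succ_preimage [MeasurableSpace Ω] {μ : Measure Ω}
    [SFinite μ] (hZ : ∀ s, Measurable (Z s)) (hZw : IsWalkLooped μ Z) (hn : n ≠ 0) {t : ℕ}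
    {A : Set (Ω × (ℕ → Fin (n + 1)))} (hA : IsHistoryEvent Z t A)
    {σ : Equiv.Perm (Fin (n + 1))} (hσ : ∀ p ∈ A, relabel p.2 t = σ) (w : Fin (n + 1)) :
    μ.prod (uniformSeq n) (A ∩ lift Z (t + 1) ⁻¹' {w}) =
      μ.prod (uniformSeq n) A * ((n + 1 : ℕ) : ℝ≥0∞)⁻¹ := by
  let g (p : Ω × (ℕ → Fin (n + 1))) : Fin n × Fin (n + 1) := (Z (t + 1) p.1, p.2 (t + 1))
  have hg (ae : Fin n × Fin (n + 1)) :
      g ⁻¹' {ae} = (Z (t + 1) ⁻¹' {ae.1}) ×ˢ {c | c (t + 1) = ae.2} := by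
    ext p
    simp [g, Prod.ext_iff]
  have hAw : A ∩ lift Z (t + 1) ⁻¹' {w} = g ⁻¹' ({ae : Fin n × Fin (n + 1) |
      Equiv.swap (σ (Fin.last n)) ae.2 (σ ae.1.castSucc) = w} : Finset _) ∩ A := by
    ext p
    simp only [Set.mem_inter_iff, Set.mem_preimage, Set.mem_singleton_iff, Finset.coe_filter,
      Finset.mem_univ, true_and]
    grind [lift, relabel, Equiv.Perm.mul_apply]
  have hnn : (n : ℝ≥0∞) * (n : ℝ≥0∞)⁻¹ = 1 :=
    ENNReal.mul_inv_cancel (by exact_mod_cast hn) (ENNReal.natCast_ne_top n)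
  rw [hAw, measure_preimage_inter_eq_sum _ fun ae => hg ae ▸
      (hZ _ (measurableSet_singleton _)).prod (measurable_pi_apply _ (measurableSet_singleton _)),
    Finset.sum_congr rfl fun ae _ => by rw [hg, Set.inter_comm, hA.measure_inter_prod hZ hZw],
    Finset.sum_const, card_swap_apply_eq, nsmul_eq_mul, mul_left_comm (n : ℝ≥0∞),
    ← mul_assoc (n : ℝ≥0∞), hnn, one_mul]

theorem isWalkLooped_lift [MeasurableSpace Ω] {μ : Measure Ω} [SFinite μ]
    (hZ : ∀ s, Measurable (Z s)) (hZw : IsWalkLooped μ Z) :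
    IsWalkLooped (μ.prod (uniformSeq n)) (lift Z) := by
  intro t v
  rcases Nat.eq_zero_or_pos n with rfl | hn
  · have : IsEmpty Ω := ⟨fun ω => (Z 0 ω).elim0⟩
    simp [Set.eq_empty_of_isEmpty]
  have hsucc : {p | ∀ s ≤ t + 1, lift Z s p = v s} =
      {p | ∀ s ≤ t, lift Z s p = v s} ∩ lift Z (t + 1) ⁻¹' {v (t + 1)} := by
    ext p
    simp [Nat.le_succ_iff, or_imp, forall_and]
  have hpart (B : Set (Ω × (ℕ → Fin (n + 1)))) : μ.prod (uniformSeq n) B =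
      ∑ σ, μ.prod (uniformSeq n) ((fun p => relabel p.2 t) ⁻¹' {σ} ∩ B) := by
    simpa only [Finset.coe_univ, Set.preimage_univ, Set.univ_inter] using
      measure_preimage_inter_eq_sum _ (fun σ => (isHistoryEvent_relabel_eq t σ).measurableSet hZ)
        univ B
  rw [hsucc, hpart, hpart {p | _}, Finset.sum_mul]
  refine Finset.sum_congr rfl fun σ _ => ?_
  rw [← Set.inter_assoc]
  refine IsHistoryEvent.measure_inter_lift_succ_preimage hZ hZw hn.ne' ?_ (fun _ hp => hp.1) _
  exact fun p hp q h => ⟨isHistoryEvent_relabel_eq t σ p hp.1 q h,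
    isHistoryEvent_lift_eq t v p hp.2 q h⟩

theorem _root_.AvoidsAE.lift [MeasurableSpace Ω] {μ : Measure Ω} {k : ℕ}
    {X : Fin k → ℕ → Ω → Fin n} (hX : AvoidsAE μ X) (ν : Measure (ℕ → Fin (n + 1))) :
    AvoidsAE (μ.prod ν) fun j => lift (X j) := by
  filter_upwards [Measure.quasiMeasurePreserving_fst.ae hX] with p ⟨h0, hstep⟩
  refine ⟨fun i j hij => (relabel p.2 0).injective.ne ((Fin.castSucc_injective n).ne (h0 i j hij)),
    fun t i j => ⟨fun hij => ?_, fun hji => relabel_succ_apply_ne p.2 t ((hstep t i j).2 hji)⟩⟩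
  exact (relabel p.2 (t + 1)).injective.ne ((Fin.castSucc_injective n).ne ((hstep t i j).1 hij))

end Lift

end AvoidanceCoupling

theorem avoidance_coupling_looped_monotone_general (n k : ℕ)
    (h : AvoidanceCouplingLooped n k) : AvoidanceCouplingLooped (n + 1) k := by
  obtain ⟨Ω, _, μ, X, _, hXm, hXw, hX⟩ := h
  exact ⟨Ω × (ℕ → Fin (n + 1)), inferInstance, μ.prod (AvoidanceCoupling.uniformSeq n),
    fun j => AvoidanceCoupling.lift (X j), inferInstance,
    fun j => AvoidanceCoupling.measurable_lift (hXm j),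
    fun j => AvoidanceCoupling.isWalkLooped_lift (hXm j) (hXw j), hX.lift _⟩

/-- If there is an avoidance coupling of `k` walkers on `K_n^*`, then there is
an avoidance coupling of `k` walkers on `K_{n+1}^*`. -/
theorem avoidance_coupling_looped_monotone (n k : ℕ) (hn : 2 ≤ n) (hk : 1 ≤ k)
    (h : AvoidanceCouplingLooped n k) : AvoidanceCouplingLooped (n + 1) k :=
  avoidance_coupling_looped_monotone_general n k h
end

section
/- If there exists an avoidance coupling of k walkers on the looped complete graph K_n^*, then there exists a 1-avoidance coupling of k Bern(1/n) walkers. -/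
/-! Mark a vertex `z` and let the Bernoulli walker `j` record at time `t` whether walker `j`
sits at `z` at time `t + 1`. Every step of a walk on `K_n^*` is uniform whatever the past, so
these indicators are i.i.d. Bernoulli(`1/n`); time `0` is skipped because the initial law of a
walker is arbitrary. Avoidance keeps the walkers' current positions pairwise distinct at every
moment of the schedule, so at most one of them is at `z`. -/

open MeasureTheory ProbabilityTheory

/-- `B` is a sequence of i.i.d. Bernoulli(`p`) random variables (with values
in `Bool`, where `true` plays the role of `1`). -/
def IsBernoulliSeq {Ω : Type} [MeasurableSpace Ω] (μ : Measure Ω) (p : ℝ)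
    (B : ℕ → Ω → Bool) : Prop :=
  ∀ (t : ℕ) (v : ℕ → Bool),
    μ {ω | ∀ s ≤ t, B s ω = v s} =
      ∏ s ∈ Finset.range (t + 1), ENNReal.ofReal (if v s then p else 1 - p)

/-- The `k` Bernoulli walkers `B 0, …, B (k-1)`, taking turns in cyclic order,
almost surely are never simultaneously at `1`: at most one of the initial
values is `1`, and at every moment of the interleaved schedule (just after
walker `j` has made its move number `t+1`) at most one of the current values
is `1`. -/
def OneAvoidanceAE {Ω : Type} [MeasurableSpace Ω] (μ : Measure Ω) {k : ℕ}
    (B : Fin k → ℕ → Ω → Bool) : Prop :=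
  ∀ᵐ ω ∂μ,
    (∀ i₁ i₂ : Fin k, i₁ ≠ i₂ → ¬(B i₁ 0 ω = true ∧ B i₂ 0 ω = true)) ∧
    (∀ (t : ℕ) (j i₁ i₂ : Fin k), i₁ ≠ i₂ →
      ¬((if i₁ ≤ j then B i₁ (t + 1) ω else B i₁ t ω) = true ∧
        (if i₂ ≤ j then B i₂ (t + 1) ω else B i₂ t ω) = true))

/-- There is a 1-avoidance coupling of `k` Bernoulli(`p`) walkers. -/
def OneAvoidanceCoupling (k : ℕ) (p : ℝ) : Prop :=
  ∃ (Ω : Type) (_ : MeasurableSpace Ω) (μ : Measure Ω)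
    (B : Fin k → ℕ → Ω → Bool),
      IsProbabilityMeasure μ ∧ (∀ j t, Measurable (B j t)) ∧
      (∀ j, IsBernoulliSeq μ p (B j)) ∧ OneAvoidanceAE μ B

open Finset

open scoped ENNReal

lemma measure_inter_preimage_finset {Ω β : Type*} [MeasurableSpace Ω] [MeasurableSpace β]
    [MeasurableSingletonClass β] (μ : Measure Ω) {f : Ω → β} (hf : Measurable f) (E : Set Ω)
    (s : Finset β) : μ (E ∩ f ⁻¹' s) = ∑ b ∈ s, μ (E ∩ f ⁻¹' {b}) := by
  rw [Set.inter_comm, ← Measure.restrict_apply (hf s.measurableSet),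
    ← sum_measure_preimage_singleton s fun b _ => hf (measurableSet_singleton b)]
  refine sum_congr rfl fun b _ => ?_
  rw [Measure.restrict_apply (hf (measurableSet_singleton b)), Set.inter_comm]

section LoopedWalk

variable {Ω : Type} [MeasurableSpace Ω] {μ : Measure Ω} {n : ℕ} {Y : ℕ → Ω → Fin n}

def trajectory (Y : ℕ → Ω → Fin n) (t : ℕ) (ω : Ω) : Fin (t + 1) → Fin n :=
  fun s => Y s ω

lemma measurable_trajectory (hY : ∀ t, Measurable (Y t)) (t : ℕ) :
    Measurable (trajectory Y t) :=
  measurable_pi_lambda _ fun s => hY s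

namespace IsWalkLooped

lemma measure_trajectory_eq_inter (hw : IsWalkLooped μ Y) {t : ℕ} (u : Fin (t + 1) → Fin n)
    (a : Fin n) :
    μ (trajectory Y t ⁻¹' {u} ∩ Y (t + 1) ⁻¹' {a}) =
      μ (trajectory Y t ⁻¹' {u}) * (n : ℝ≥0∞)⁻¹ := by
  set v : ℕ → Fin n := fun s => if h : s < t + 1 then u ⟨s, h⟩ else a
  have hu : trajectory Y t ⁻¹' {u} = {ω | ∀ s ≤ t, Y s ω = v s} := by
    ext ω
    simp only [trajectory, Set.mem_preimage, Set.mem_singleton_iff, funext_iff, Fin.forall_iff,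
      Set.mem_ofPred_eq, v, Nat.lt_succ_iff]
    exact forall₂_congr fun s hs => by rw [dif_pos hs]
  have hua :
      trajectory Y t ⁻¹' {u} ∩ Y (t + 1) ⁻¹' {a} = {ω | ∀ s ≤ t + 1, Y s ω = v s} := by
    ext ω
    simp [hu, v, Nat.le_succ_iff, or_imp, forall_and]
  rw [hua, hu, hw t v]

lemma measure_trajectory_mem_inter (hw : IsWalkLooped μ Y) (hY : ∀ t, Measurable (Y t))
    {t : ℕ} (P : Finset (Fin (t + 1) → Fin n)) (a : Fin n) :
    μ (trajectory Y t ⁻¹' P ∩ Y (t + 1) ⁻¹' {a}) =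
      μ (trajectory Y t ⁻¹' P) * (n : ℝ≥0∞)⁻¹ := by
  rw [Set.inter_comm, measure_inter_preimage_finset μ (measurable_trajectory hY t),
    ← sum_measure_preimage_singleton P fun u _ =>
      measurable_trajectory hY t (measurableSet_singleton u), sum_mul]
  refine sum_congr rfl fun u _ => ?_
  rw [Set.inter_comm, hw.measure_trajectory_eq_inter]

lemma measure_forall_lt_succ_mem [IsProbabilityMeasure μ] (hw : IsWalkLooped μ Y)
    (hY : ∀ t, Measurable (Y t)) (A : ℕ → Finset (Fin n)) (t : ℕ) :
    μ {ω | ∀ s < t, Y (s + 1) ω ∈ A s} = ∏ s ∈ range t, (#(A s) : ℝ≥0∞) * (n : ℝ≥0∞)⁻¹ := by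
  induction t with
  | zero => simp
  | succ t ih =>
    set E := {ω | ∀ s < t, Y (s + 1) ω ∈ A s}
    have hE : E = trajectory Y t ⁻¹'
        ↑(univ.filter fun u : Fin (t + 1) → Fin n => ∀ s : Fin t, u s.succ ∈ A s) := by
      ext ω
      simp [E, trajectory, Fin.forall_iff]
    have hsplit : {ω | ∀ s < t + 1, Y (s + 1) ω ∈ A s} = E ∩ Y (t + 1) ⁻¹' ↑(A t) := by
      ext ω
      exact Nat.forall_lt_succ_right
    calc μ {ω | ∀ s < t + 1, Y (s + 1) ω ∈ A s}
        = ∑ a ∈ A t, μ (E ∩ Y (t + 1) ⁻¹' {a}) := by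
          rw [hsplit, measure_inter_preimage_finset μ (hY (t + 1))]
      _ = ∑ _a ∈ A t, μ E * (n : ℝ≥0∞)⁻¹ := by
          simp only [hE, hw.measure_trajectory_mem_inter hY]
      _ = ∏ s ∈ range (t + 1), (#(A s) : ℝ≥0∞) * (n : ℝ≥0∞)⁻¹ := by
          rw [ih, sum_const, nsmul_eq_mul, prod_range_succ]
          ring

lemma isBernoulliSeq_decide_succ_eq [IsProbabilityMeasure μ] (hw : IsWalkLooped μ Y)
    (hY : ∀ t, Measurable (Y t)) (z : Fin n) :
    IsBernoulliSeq μ (1 / n) (fun t ω => decide (Y (t + 1) ω = z)) := by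
  intro t v
  have hn0 : 0 < n := Fin.pos z
  have hn : (0 : ℝ) < n := Nat.cast_pos.2 hn0
  have ofReal_div (m : ℕ) : ENNReal.ofReal (m / n) = m * (n : ℝ≥0∞)⁻¹ := by
    rw [ENNReal.ofReal_div_of_pos hn, ENNReal.ofReal_natCast, ENNReal.ofReal_natCast,
      div_eq_mul_inv]
  set A : ℕ → Finset (Fin n) := fun s => univ.filter fun a => decide (a = z) = v s
  have hA : {ω | ∀ s ≤ t, decide (Y (s + 1) ω = z) = v s} =
      {ω | ∀ s < t + 1, Y (s + 1) ω ∈ A s} := by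
    simp [A]
  rw [hA, hw.measure_forall_lt_succ_mem hY]
  refine prod_congr rfl fun s _ => ?_
  have hcard : #(A s) = if v s then 1 else n - 1 := by
    cases hv : v s <;> simp [A, hv, filter_eq', filter_ne', card_erase_of_mem]
  rw [hcard]
  cases v s
  · have hsub : (1 : ℝ) - 1 / n = ((n - 1 : ℕ) : ℝ) / n := by
      rw [Nat.cast_sub hn0, Nat.cast_one]
      field_simp
    rw [if_neg Bool.false_ne_true, if_neg Bool.false_ne_true, hsub, ofReal_div]
  · rw [if_pos rfl, if_pos rfl, ← ofReal_div, Nat.cast_one]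

end IsWalkLooped

end LoopedWalk

section Avoidance

variable {α : Type*} {k : ℕ} {x : Fin k → ℕ → α}

def Avoids (x : Fin k → ℕ → α) : Prop :=
  ∀ (t : ℕ) (i j : Fin k), (i < j → x j (t + 1) ≠ x i (t + 1)) ∧ (j < i → x j (t + 1) ≠ x i t)

lemma Avoids.injective_succ (hx : Avoids x) (t : ℕ) : Function.Injective fun i => x i (t + 1) := by
  intro i₁ i₂ heq
  by_contra hne
  rcases lt_or_gt_of_ne hne with hlt | hlt
  · exact (hx t i₁ i₂).1 hlt heq.symm
  · exact (hx t i₂ i₁).1 hlt heq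

lemma Avoids.injective_mid_round (hx : Avoids x) (t : ℕ) (j : Fin k) :
    Function.Injective fun i => if i ≤ j then x i (t + 2) else x i (t + 1) := by
  have hmixed : ∀ i₁ i₂, i₁ ≤ j → ¬i₂ ≤ j → x i₁ (t + 2) ≠ x i₂ (t + 1) := fun i₁ i₂ h₁ h₂ =>
    (hx (t + 1) i₂ i₁).2 (lt_of_le_of_lt h₁ (not_le.1 h₂))
  intro i₁ i₂ heq
  by_cases h₁ : i₁ ≤ j <;> by_cases h₂ : i₂ ≤ j <;> simp only [h₁, h₂, if_true, if_false] at heq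
  · exact hx.injective_succ (t + 1) heq
  · exact absurd heq (hmixed i₁ i₂ h₁ h₂)
  · exact absurd heq.symm (hmixed i₂ i₁ h₂ h₁)
  · exact hx.injective_succ t heq

end Avoidance

lemma AvoidsAE.oneAvoidanceAE_decide_succ_eq {Ω : Type} [MeasurableSpace Ω] {μ : Measure Ω}
    {n k : ℕ} {X : Fin k → ℕ → Ω → Fin n} (hX : AvoidsAE μ X) (z : Fin n) :
    OneAvoidanceAE μ fun i t ω => decide (X i (t + 1) ω = z) := by
  have at_most_one {f : Fin k → Fin n} (hf : Function.Injective f) {i₁ i₂ : Fin k}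
      (hne : i₁ ≠ i₂) : ¬(f i₁ = z ∧ f i₂ = z) := fun h => hf.ne hne (h.1.trans h.2.symm)
  filter_upwards [hX] with ω hω
  obtain ⟨-, hω⟩ := hω
  refine ⟨fun i₁ i₂ hne => ?_, fun t j i₁ i₂ hne => ?_⟩
  · simpa using at_most_one (Avoids.injective_succ (x := fun i t => X i t ω) hω 0) hne
  · split_ifs <;> simpa [*] using
      at_most_one (Avoids.injective_mid_round (x := fun i t => X i t ω) hω t j) hne

theorem one_avoidance_of_avoidance_coupling_looped_general (n k : ℕ)
    (hn : 2 ≤ n) (h : AvoidanceCouplingLooped n k) :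
    OneAvoidanceCoupling k (1 / (n : ℝ)) := by
  obtain ⟨Ω, _, μ, X, hμ, hX, hwalk, havoid⟩ := h
  let z : Fin n := ⟨0, by omega⟩
  exact ⟨Ω, _, μ, fun j t ω => decide (X j (t + 1) ω = z), hμ,
    fun j t => (measurable_of_countable fun a : Fin n => decide (a = z)).comp (hX j (t + 1)),
    fun j => (hwalk j).isBernoulliSeq_decide_succ_eq (hX j) z,
    havoid.oneAvoidanceAE_decide_succ_eq z⟩

/-- If there is an avoidance coupling of `k` walkers on `K_n^*`, then there is
a 1-avoidance coupling of `k` Bernoulli(`1/n`) walkers. -/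
theorem one_avoidance_of_avoidance_coupling_looped (n k : ℕ)
    (hn : 2 ≤ n) (hk : 1 ≤ k) (h : AvoidanceCouplingLooped n k) :
    OneAvoidanceCoupling k (1 / (n : ℝ)) :=
  one_avoidance_of_avoidance_coupling_looped_general n k hn h
end

section
/- Let m, n ≥ 2 and r, s ≥ 1 be integers. If there exist avoidance couplings of r walkers on the looped complete graph K_m^* and of s walkers on the looped complete graph K_n^*, then for every k with r + s − 1 ≤ k ≤ r·s there exists an avoidance coupling of k walkers on K_{mn}^*; moreover, if the two given couplings are Markovian, then the resulting coupling can be taken to be Markovian. -/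
open MeasureTheory ProbabilityTheory

/-!
Identify `Fin (m * n)` with `Fin m × Fin n` and run independent couplings `X` (on `K_m^*`) and
`Y` (on `K_n^*`) side by side. The `k` new walkers are a lex-increasing sequence of cells `(a, b)`
of the `r × s` grid containing its first row and first column, which exists because
`r + s - 1 ≤ k ≤ r s`; the walker in cell `(a, b)` moves as the pair `(X a, Y b)`. Two walkers are
separated by `X` if their rows differ and by `Y` otherwise, and the lex order is compatible with the
turn orders of both couplings. Since row `a` starts with `(a, 0)` and column `b` with `(0, b)`, the
first walker using `X a` (resp. `Y b`) moves right after the first copies of all earlier walkers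
of `X` (resp. `Y`), and every later copy just repeats its move; this keeps the product Markovian.
-/

open Finset Function

theorem exists_strictMono_lex_range_cross {r s k : ℕ} [NeZero r] [NeZero s]
    (hk1 : r + s - 1 ≤ k) (hk2 : k ≤ r * s) :
    ∃ e : Fin k → Fin r × Fin s, StrictMono (toLex ∘ e) ∧
      (∀ a, (a, 0) ∈ Set.range e) ∧ ∀ b, (0, b) ∈ Set.range e := by
  classical
  set A : Finset (Fin r ×ₗ Fin s) := univ.image fun a => toLex (a, 0)
  set B : Finset (Fin r ×ₗ Fin s) := univ.image fun b => toLex (0, b)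
  have hA : #A = r := (card_image_of_injective _ fun a a' h => by simpa using h).trans (by simp)
  have hB : #B = s := (card_image_of_injective _ fun b b' h => by simpa using h).trans (by simp)
  have hAB : 1 ≤ #(A ∩ B) := card_pos.2 ⟨toLex (0, 0), by simp [A, B]⟩
  have hcross : #(A ∪ B) ≤ k := by
    have := card_union_add_card_inter A B
    omega
  obtain ⟨S, hS, -, hSk⟩ :=
    exists_subsuperset_card_eq (subset_univ _) hcross (by simpa using hk2)
  have hrange : ∀ z, toLex z ∈ S → z ∈ Set.range (ofLex ∘ S.orderEmbOfFin hSk) := by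
    intro z hz
    rw [← Finset.mem_coe, ← range_orderEmbOfFin S hSk] at hz
    obtain ⟨p, hp⟩ := hz
    exact ⟨p, by simp [hp]⟩
  exact ⟨ofLex ∘ S.orderEmbOfFin hSk, (S.orderEmbOfFin hSk).strictMono,
    fun a => hrange _ (hS (by simp [A])), fun b => hrange _ (hS (by simp [B]))⟩

/-- Walker `p` of a new process copies walker `ρ p` of an old one; `σ i` is the first copy of
`i` in turn order, and the first copies come in the order of the walkers they copy. -/
structure IsFirstCopySection {k d : ℕ} (ρ : Fin k → Fin d) (σ : Fin d → Fin k) : Prop where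
  strictMono : StrictMono σ
  leftInverse : LeftInverse ρ σ
  le : ∀ p, σ (ρ p) ≤ p

section LexEmbedding

variable {r s k : ℕ} {e : Fin k → Fin r × Fin s}

theorem exists_isFirstCopySection_fst [NeZero s] (he : StrictMono (toLex ∘ e))
    (hrow : ∀ a, (a, 0) ∈ Set.range e) :
    ∃ σ, IsFirstCopySection (fun p => (e p).1) σ := by
  choose σ hσ using hrow
  refine ⟨σ, fun a a' h => ?_, fun a => by simp [hσ], fun p => ?_⟩
  · rw [← he.lt_iff_lt, comp_apply, comp_apply, hσ, hσ, Prod.Lex.toLex_lt_toLex]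
    exact Or.inl h
  · rw [← he.le_iff_le, comp_apply, comp_apply, hσ, Prod.Lex.toLex_le_toLex]
    exact Or.inr ⟨rfl, Fin.zero_le _⟩

theorem exists_isFirstCopySection_snd [NeZero r] (he : StrictMono (toLex ∘ e))
    (hcol : ∀ b, (0, b) ∈ Set.range e) :
    ∃ σ, IsFirstCopySection (fun p => (e p).2) σ := by
  choose σ hσ using hcol
  refine ⟨σ, fun b b' h => ?_, fun b => by simp [hσ], fun p => ?_⟩
  · rw [← he.lt_iff_lt, comp_apply, comp_apply, hσ, hσ, Prod.Lex.toLex_lt_toLex]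
    exact Or.inr ⟨rfl, h⟩
  · rw [← he.le_iff_le, comp_apply, comp_apply, hσ, Prod.Lex.toLex_le_toLex]
    rcases (Fin.zero_le (e p).1).lt_or_eq with h | h
    · exact Or.inl h
    · exact Or.inr ⟨h, le_rfl⟩

end LexEmbedding

section Markov

variable {Ω : Type} {m k : ℕ}

def historyEvent (X : Fin k → ℕ → Ω → Fin m) (t : ℕ) (j : Fin k) (v : Fin k → ℕ → Fin m) :
    Set Ω :=
  {ω | (∀ i : Fin k, ∀ s ≤ t, X i s ω = v i s) ∧ (∀ i < j, X i (t + 1) ω = v i (t + 1))}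

theorem isMarkovianCoupling_iff [MeasurableSpace Ω] {μ : Measure Ω} (X : Fin k → ℕ → Ω → Fin m) :
    IsMarkovianCoupling μ X ↔ ∃ f : Fin k → (Fin k → Fin m) → PMF (Fin m),
      ∀ (t : ℕ) (j : Fin k) (v : Fin k → ℕ → Fin m) (w : Fin m),
        μ (historyEvent X t j v ∩ {ω | X j (t + 1) ω = w}) =
          μ (historyEvent X t j v) * f j (fun i => if i < j then v i (t + 1) else v i t) w :=
  Iff.rfl

variable {d : ℕ} {X : Fin d → ℕ → Ω → Fin m} {ρ : Fin k → Fin d} {σ : Fin d → Fin k}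

theorem historyEvent_comp_subset (hσ : IsFirstCopySection ρ σ) {t : ℕ} {j : Fin k}
    (hj : σ (ρ j) = j) (v : Fin k → ℕ → Fin m) :
    historyEvent (fun p => X (ρ p)) t j v ⊆ historyEvent X t (ρ j) fun i => v (σ i) := by
  rintro ω ⟨hpast, hnow⟩
  refine ⟨fun i s hs => ?_, fun i hi => ?_⟩
  · simpa only [hσ.leftInverse i] using hpast (σ i) s hs
  · simpa only [hσ.leftInverse i] using hnow (σ i) (hj ▸ hσ.strictMono hi)

/-- On a nonempty history event the copies are consistent, so the constraints on the first
copies imply all the others. -/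
theorem historyEvent_comp_eq (hσ : IsFirstCopySection ρ σ) {t : ℕ} {j : Fin k}
    (hj : σ (ρ j) = j) {v : Fin k → ℕ → Fin m} {ω₀ : Ω}
    (hω₀ : ω₀ ∈ historyEvent (fun p => X (ρ p)) t j v) :
    historyEvent (fun p => X (ρ p)) t j v = historyEvent X t (ρ j) fun i => v (σ i) := by
  obtain ⟨hpast₀, hnow₀⟩ := hω₀
  refine (historyEvent_comp_subset hσ hj v).antisymm fun ω ⟨hpast, hnow⟩ => ⟨?_, ?_⟩
  · intro p s hs
    calc X (ρ p) s ω = v (σ (ρ p)) s := hpast (ρ p) s hs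
      _ = X (ρ (σ (ρ p))) s ω₀ := (hpast₀ _ s hs).symm
      _ = v p s := by rw [hσ.leftInverse]; exact hpast₀ p s hs
  · intro p hp
    have hσp : σ (ρ p) < j := (hσ.le p).trans_lt hp
    have hρp : ρ p < ρ j := by rwa [← hσ.strictMono.lt_iff_lt, hj]
    calc X (ρ p) (t + 1) ω = v (σ (ρ p)) (t + 1) := hnow (ρ p) hρp
      _ = X (ρ (σ (ρ p))) (t + 1) ω₀ := (hnow₀ _ hσp).symm
      _ = v p (t + 1) := by rw [hσ.leftInverse]; exact hnow₀ p hp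

theorem IsMarkovianCoupling.comp [MeasurableSpace Ω] {μ : Measure Ω}
    (hX : IsMarkovianCoupling μ X) (hσ : IsFirstCopySection ρ σ) :
    IsMarkovianCoupling μ fun p => X (ρ p) := by
  classical
  obtain ⟨f, hf⟩ := (isMarkovianCoupling_iff X).1 hX
  -- a later copy repeats the move of the first copy, a first copy moves as the walker it copies
  refine (isMarkovianCoupling_iff _).2 ⟨fun j c =>
    if σ (ρ j) < j then PMF.pure (c (σ (ρ j))) else f (ρ j) (c ∘ σ), fun t j v w => ?_⟩
  beta_reduce
  by_cases hj : σ (ρ j) < j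
  · have hcopy : ∀ ω ∈ historyEvent (fun p => X (ρ p)) t j v,
        X (ρ j) (t + 1) ω = v (σ (ρ j)) (t + 1) := fun ω hω => by
      simpa only [hσ.leftInverse (ρ j)] using hω.2 _ hj
    rw [if_pos hj, PMF.pure_apply, if_pos hj]
    split_ifs with hw
    · rw [mul_one]
      congr 1
      exact Set.inter_eq_left.2 fun ω hω => (hcopy ω hω).trans hw.symm
    · rw [mul_zero]
      refine (congrArg μ (Set.eq_empty_of_forall_notMem ?_)).trans measure_empty
      rintro ω ⟨hω, hwω⟩
      exact hw (hwω.symm.trans (hcopy ω hω))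
  · have hj' : σ (ρ j) = j := (hσ.le j).antisymm (not_lt.1 hj)
    rcases (historyEvent (fun p => X (ρ p)) t j v).eq_empty_or_nonempty with hE | ⟨ω₀, hω₀⟩
    · rw [hE, Set.empty_inter, measure_empty, zero_mul]
    · rw [if_neg hj, historyEvent_comp_eq hσ hj' hω₀, hf]
      congr 3 with i
      simp only [comp_apply, ← hσ.strictMono.lt_iff_lt, hj']

end Markov

noncomputable def PMF.finProd {m n : ℕ} (p : PMF (Fin m)) (q : PMF (Fin n)) :
    PMF (Fin (m * n)) :=
  PMF.ofFintype (fun w => p (finProdFinEquiv.symm w).1 * q (finProdFinEquiv.symm w).2) <| by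
    rw [finProdFinEquiv.symm.sum_comp (fun z => p z.1 * q z.2), Fintype.sum_prod_type,
      ← Finset.sum_mul_sum]
    simpa only [tsum_fintype, one_mul] using congrArg₂ (· * ·) p.tsum_coe q.tsum_coe

theorem PMF.finProd_apply {m n : ℕ} (p : PMF (Fin m)) (q : PMF (Fin n)) (w : Fin (m * n)) :
    p.finProd q w = p (finProdFinEquiv.symm w).1 * q (finProdFinEquiv.symm w).2 :=
  rfl

section Pair

variable {Ω₁ Ω₂ : Type} {m n : ℕ}

def pairWalk (x : ℕ → Ω₁ → Fin m) (y : ℕ → Ω₂ → Fin n) : ℕ → Ω₁ × Ω₂ → Fin (m * n) :=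
  fun t ω => finProdFinEquiv (x t ω.1, y t ω.2)

theorem pairWalk_eq_iff {x : ℕ → Ω₁ → Fin m} {y : ℕ → Ω₂ → Fin n} {t : ℕ} {ω : Ω₁ × Ω₂}
    {u : Fin (m * n)} :
    pairWalk x y t ω = u ↔
      x t ω.1 = (finProdFinEquiv.symm u).1 ∧ y t ω.2 = (finProdFinEquiv.symm u).2 := by
  rw [pairWalk, ← Equiv.eq_symm_apply, Prod.ext_iff]

theorem pairWalk_eq_pairWalk_iff {x x' : ℕ → Ω₁ → Fin m} {y y' : ℕ → Ω₂ → Fin n}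
    {t t' : ℕ} {ω : Ω₁ × Ω₂} :
    pairWalk x y t ω = pairWalk x' y' t' ω ↔ x t ω.1 = x' t' ω.1 ∧ y t ω.2 = y' t' ω.2 := by
  rw [pairWalk, pairWalk, finProdFinEquiv.apply_eq_iff_eq, Prod.mk.injEq]

theorem measurable_pairWalk [MeasurableSpace Ω₁] [MeasurableSpace Ω₂]
    {x : ℕ → Ω₁ → Fin m} {y : ℕ → Ω₂ → Fin n} (hx : ∀ t, Measurable (x t))
    (hy : ∀ t, Measurable (y t)) (t : ℕ) : Measurable (pairWalk x y t) :=
  (measurable_of_countable _).comp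
    (((hx t).comp measurable_fst).prodMk ((hy t).comp measurable_snd))

theorem historyEvent_pairWalk {k : ℕ} (U : Fin k → ℕ → Ω₁ → Fin m)
    (V : Fin k → ℕ → Ω₂ → Fin n) (t : ℕ) (j : Fin k) (v : Fin k → ℕ → Fin (m * n)) :
    historyEvent (fun p => pairWalk (U p) (V p)) t j v =
      historyEvent U t j (fun p s => (finProdFinEquiv.symm (v p s)).1) ×ˢ
        historyEvent V t j (fun p s => (finProdFinEquiv.symm (v p s)).2) := by
  ext ω
  simp only [historyEvent, Set.mem_ofPred_eq, Set.mem_prod, pairWalk_eq_iff, imp_and, forall_and]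
  tauto

end Pair

theorem AvoidsAE.ae_injective {Ω : Type} [MeasurableSpace Ω] {μ : Measure Ω} {n k : ℕ}
    {X : Fin k → ℕ → Ω → Fin n} (hX : AvoidsAE μ X) :
    ∀ᵐ ω ∂μ, ∀ t, Injective fun i => X i t ω := by
  filter_upwards [hX] with ω ⟨h0, ht⟩ t i j hij
  by_contra hne
  cases t with
  | zero => exact h0 i j hne hij
  | succ t =>
    rcases lt_or_gt_of_ne hne with h | h
    · exact (ht t i j).1 h hij.symm
    · exact (ht t j i).1 h hij

section PairCoupling

variable {Ω₁ Ω₂ : Type} [MeasurableSpace Ω₁] [MeasurableSpace Ω₂]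
  {μ₁ : Measure Ω₁} {μ₂ : Measure Ω₂} {m n : ℕ}

theorem AvoidsAE.pair_of_strictMono {r s k : ℕ} {X : Fin r → ℕ → Ω₁ → Fin m}
    {Y : Fin s → ℕ → Ω₂ → Fin n} (hX : AvoidsAE μ₁ X) (hY : AvoidsAE μ₂ Y)
    {e : Fin k → Fin r × Fin s} (he : StrictMono (toLex ∘ e)) :
    AvoidsAE (μ₁.prod μ₂) fun p => pairWalk (X (e p).1) (Y (e p).2) := by
  have he' : Injective e := fun p q h => he.injective (congrArg toLex h)
  filter_upwards [Measure.quasiMeasurePreserving_fst.ae hX,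
    Measure.quasiMeasurePreserving_snd.ae hY, Measure.quasiMeasurePreserving_fst.ae hX.ae_injective,
    Measure.quasiMeasurePreserving_snd.ae hY.ae_injective] with ω ⟨_, hXt⟩ ⟨_, hYt⟩ hXinj hYinj
  have hinj : ∀ t, Injective fun p => pairWalk (X (e p).1) (Y (e p).2) t ω := fun t p q h => by
    obtain ⟨hx, hy⟩ := pairWalk_eq_pairWalk_iff.1 h
    exact he' (Prod.ext (hXinj t hx) (hYinj t hy))
  refine ⟨fun i j hij => (hinj 0).ne hij,
    fun t i j => ⟨fun hij => (hinj (t + 1)).ne hij.ne', fun hji h => ?_⟩⟩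
  obtain ⟨hx, hy⟩ := pairWalk_eq_pairWalk_iff.1 h
  rcases Prod.Lex.toLex_lt_toLex.1 (he hji) with hrow | ⟨-, hcol⟩
  · exact (hXt t _ _).2 hrow hx
  · exact (hYt t _ _).2 hcol hy

variable [SFinite μ₂]

theorem IsWalkLooped.pair {x : ℕ → Ω₁ → Fin m} {y : ℕ → Ω₂ → Fin n}
    (hx : IsWalkLooped μ₁ x) (hy : IsWalkLooped μ₂ y) :
    IsWalkLooped (μ₁.prod μ₂) (pairWalk x y) := by
  intro t v
  have hpath : ∀ T, {ω | ∀ s ≤ T, pairWalk x y s ω = v s} =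
      {ω₁ | ∀ s ≤ T, x s ω₁ = (finProdFinEquiv.symm (v s)).1} ×ˢ
        {ω₂ | ∀ s ≤ T, y s ω₂ = (finProdFinEquiv.symm (v s)).2} := fun T => by
    ext ω
    simp only [Set.mem_ofPred_eq, Set.mem_prod, pairWalk_eq_iff, imp_and, forall_and]
  rw [hpath, hpath, Measure.prod_prod, Measure.prod_prod, hx, hy, Nat.cast_mul,
    ENNReal.mul_inv (Or.inr (ENNReal.natCast_ne_top n)) (Or.inl (ENNReal.natCast_ne_top m))]
  ring

theorem IsMarkovianCoupling.pair {k : ℕ} {U : Fin k → ℕ → Ω₁ → Fin m}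
    {V : Fin k → ℕ → Ω₂ → Fin n} (hU : IsMarkovianCoupling μ₁ U)
    (hV : IsMarkovianCoupling μ₂ V) :
    IsMarkovianCoupling (μ₁.prod μ₂) fun p => pairWalk (U p) (V p) := by
  obtain ⟨f, hf⟩ := (isMarkovianCoupling_iff U).1 hU
  obtain ⟨g, hg⟩ := (isMarkovianCoupling_iff V).1 hV
  refine (isMarkovianCoupling_iff _).2 ⟨fun j c =>
    (f j fun p => (finProdFinEquiv.symm (c p)).1).finProd
      (g j fun p => (finProdFinEquiv.symm (c p)).2), fun t j v w => ?_⟩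
  have hnext : {ω | pairWalk (U j) (V j) (t + 1) ω = w} =
      {ω₁ | U j (t + 1) ω₁ = (finProdFinEquiv.symm w).1} ×ˢ
        {ω₂ | V j (t + 1) ω₂ = (finProdFinEquiv.symm w).2} := by
    ext ω
    simp only [Set.mem_ofPred_eq, Set.mem_prod, pairWalk_eq_iff]
  rw [historyEvent_pairWalk, hnext, Set.prod_inter_prod, Measure.prod_prod, Measure.prod_prod,
    hf, hg, PMF.finProd_apply]
  simp only [apply_ite (fun u => (finProdFinEquiv.symm u).1),
    apply_ite (fun u => (finProdFinEquiv.symm u).2)]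
  ring

end PairCoupling

theorem avoidance_coupling_looped_product_general (m n r s k : ℕ)
    (hr : 1 ≤ r) (hs : 1 ≤ s)
    (hk1 : r + s - 1 ≤ k) (hk2 : k ≤ r * s) :
    (AvoidanceCouplingLooped m r → AvoidanceCouplingLooped n s →
      AvoidanceCouplingLooped (m * n) k) ∧
    (MarkovianAvoidanceCouplingLooped m r → MarkovianAvoidanceCouplingLooped n s →
      MarkovianAvoidanceCouplingLooped (m * n) k) := by
  have : NeZero r := ⟨by omega⟩
  have : NeZero s := ⟨by omega⟩
  obtain ⟨e, he, hrow, hcol⟩ := exists_strictMono_lex_range_cross hk1 hk2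
  refine ⟨?_, ?_⟩
  · rintro ⟨Ω₁, _, μ₁, X, _, hXm, hXw, hXa⟩ ⟨Ω₂, _, μ₂, Y, _, hYm, hYw, hYa⟩
    exact ⟨Ω₁ × Ω₂, inferInstance, μ₁.prod μ₂, fun p => pairWalk (X (e p).1) (Y (e p).2),
      inferInstance, fun p => measurable_pairWalk (hXm _) (hYm _),
      fun p => (hXw _).pair (hYw _), hXa.pair_of_strictMono hYa he⟩
  · rintro ⟨Ω₁, _, μ₁, X, _, hXm, hXw, hXa, hXM⟩ ⟨Ω₂, _, μ₂, Y, _, hYm, hYw, hYa, hYM⟩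
    obtain ⟨σ₁, hσ₁⟩ := exists_isFirstCopySection_fst he hrow
    obtain ⟨σ₂, hσ₂⟩ := exists_isFirstCopySection_snd he hcol
    exact ⟨Ω₁ × Ω₂, inferInstance, μ₁.prod μ₂, fun p => pairWalk (X (e p).1) (Y (e p).2),
      inferInstance, fun p => measurable_pairWalk (hXm _) (hYm _),
      fun p => (hXw _).pair (hYw _), hXa.pair_of_strictMono hYa he,
      (hXM.comp hσ₁).pair (hYM.comp hσ₂)⟩

/-- Product lemma: from avoidance couplings of `r` walkers on `K_m^*` and of
`s` walkers on `K_n^*` one obtains an avoidance coupling of `k` walkers on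
`K_{mn}^*` for any `r + s - 1 ≤ k ≤ r * s`; moreover, if the given couplings
are Markovian then so is the resulting one. -/
theorem avoidance_coupling_looped_product (m n r s k : ℕ)
    (hm : 2 ≤ m) (hn : 2 ≤ n) (hr : 1 ≤ r) (hs : 1 ≤ s)
    (hk1 : r + s - 1 ≤ k) (hk2 : k ≤ r * s) :
    (AvoidanceCouplingLooped m r → AvoidanceCouplingLooped n s →
      AvoidanceCouplingLooped (m * n) k) ∧
    (MarkovianAvoidanceCouplingLooped m r → MarkovianAvoidanceCouplingLooped n s →
      MarkovianAvoidanceCouplingLooped (m * n) k) :=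
  avoidance_coupling_looped_product_general m n r s k hr hs hk1 hk2
end

section
/- For every integer n ≥ 4, there is no avoidance coupling of n − 1 walkers on the looped complete graph K_n^*. -/
open MeasureTheory ProbabilityTheory

/-!
Look at round 3 and at the first walker `j₀`. Call a walker *backtracking* if it leaves its time-1
position at step 2 and returns to it at step 3. With `n - 1` walkers on `n` vertices the
configuration after round 2 leaves exactly one vertex free, and a backtracking walker's time-1
position must be that vertex: the walkers before it avoided it while moving in round 2, and the
walkers after it are still there when it returns in round 3. Hence at most one walker backtracks,
and if some `j ≠ j₀` does, then `j₀` cannot have moved at step 3, since it could only have moved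
to the free vertex, where `j` lands later in the round. Thus
`∑_{j ≠ j₀} P(j backtracks) ≤ P(j₀ stays)`, i.e. `(n - 2)(n - 1)/n² ≤ 1/n`, false for `n ≥ 4`.
-/

open Finset Function

def Backtracks {α : Type*} (y : ℕ → α) (t : ℕ) : Prop :=
  y (t + 2) = y t ∧ y (t + 1) ≠ y t

def IsCollisionFree {n k : ℕ} (x : Fin k → ℕ → Fin n) : Prop :=
  (∀ i j : Fin k, i ≠ j → x i 0 ≠ x j 0) ∧
  ∀ (t : ℕ) (i j : Fin k),
    (i < j → x j (t + 1) ≠ x i (t + 1)) ∧ (j < i → x j (t + 1) ≠ x i t)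

theorem Function.Injective.eq_of_notMem_range {α β : Type*} [Fintype α] [Fintype β]
    {f : α → β} (hf : Injective f) (hcard : Fintype.card β ≤ Fintype.card α + 1) {a b : β}
    (ha : a ∉ Set.range f) (hb : b ∉ Set.range f) : a = b := by
  classical
  by_contra hab
  have hb' : b ∉ univ.map ⟨f, hf⟩ := by simpa using hb
  have ha' : a ∉ insert b (univ.map ⟨f, hf⟩) := by simpa [hab] using ha
  have := card_le_univ (insert a (insert b (univ.map ⟨f, hf⟩)))
  rw [card_insert_of_notMem ha', card_insert_of_notMem hb', card_map, card_univ] at this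
  omega

namespace IsCollisionFree

variable {n k : ℕ} {x : Fin k → ℕ → Fin n}

theorem injective (hx : IsCollisionFree x) (t : ℕ) : Injective fun l => x l t := by
  intro i j hij
  by_contra hne
  cases t with
  | zero => exact hx.1 i j hne hij
  | succ t =>
    rcases lt_or_gt_of_ne hne with h | h
    · exact (hx.2 t i j).1 h hij.symm
    · exact (hx.2 t j i).1 h hij

theorem notMem_range_of_backtracks (hx : IsCollisionFree x) {j : Fin k} {t : ℕ}
    (hj : Backtracks (x j) t) : x j t ∉ Set.range fun l => x l (t + 1) := by
  rintro ⟨l, hl⟩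
  rcases lt_trichotomy l j with hlj | rfl | hjl
  · exact (hx.2 t j l).2 hlj hl
  · exact hj.2 hl
  · exact (hx.2 (t + 1) l j).2 hjl (hj.1.trans hl.symm)

theorem notMem_range_of_first_moves (hx : IsCollisionFree x) {j₀ : Fin k} (hj₀ : ∀ l, j₀ ≤ l)
    {t : ℕ} (hmove : x j₀ (t + 2) ≠ x j₀ (t + 1)) :
    x j₀ (t + 2) ∉ Set.range fun l => x l (t + 1) := by
  rintro ⟨l, hl⟩
  rcases (hj₀ l).eq_or_lt with rfl | hlt
  · exact hmove hl.symm
  · exact (hx.2 (t + 1) l j₀).2 hlt hl.symm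

theorem eq_of_backtracks (hx : IsCollisionFree x) (hk : k + 1 = n) {i j : Fin k} {t : ℕ}
    (hi : Backtracks (x i) t) (hj : Backtracks (x j) t) : i = j :=
  hx.injective t <| (hx.injective (t + 1)).eq_of_notMem_range (by simp [hk])
    (hx.notMem_range_of_backtracks hi) (hx.notMem_range_of_backtracks hj)

theorem first_stays_of_backtracks (hx : IsCollisionFree x) (hk : k + 1 = n) {j₀ j : Fin k}
    (hj₀ : ∀ l, j₀ ≤ l) (hne : j ≠ j₀) {t : ℕ} (hj : Backtracks (x j) t) :
    x j₀ (t + 2) = x j₀ (t + 1) := by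
  by_contra hmove
  have hhole : x j₀ (t + 2) = x j t :=
    (hx.injective (t + 1)).eq_of_notMem_range (by simp [hk])
      (hx.notMem_range_of_first_moves hj₀ hmove) (hx.notMem_range_of_backtracks hj)
  exact (hx.2 (t + 1) j₀ j).1 ((hj₀ j).lt_of_ne hne.symm) (hj.1.trans hhole.symm)

end IsCollisionFree

section Measure

variable {Ω : Type} [MeasurableSpace Ω] {μ : Measure Ω}

theorem sum_measure_le_of_ae_disjoint_of_ae_subset {ι : Type*} (s : Finset ι) {E : ι → Set Ω}
    {F : Set Ω} (hE : ∀ i ∈ s, NullMeasurableSet (E i) μ)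
    (hdisj : ∀ᵐ ω ∂μ, ∀ i ∈ s, ∀ j ∈ s, ω ∈ E i → ω ∈ E j → i = j)
    (hsub : ∀ᵐ ω ∂μ, ∀ i ∈ s, ω ∈ E i → ω ∈ F) :
    ∑ i ∈ s, μ (E i) ≤ μ F := by
  rw [← measure_biUnion_finset₀ ?_ hE]
  · refine measure_mono_ae (hsub.mono fun ω hω hmem => ?_)
    obtain ⟨i, hi, hωi⟩ := Set.mem_iUnion₂.1 hmem
    exact hω i hi hωi
  · intro i hi j hj hij
    exact measure_eq_zero_iff_ae_notMem.2 <|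
      hdisj.mono fun ω hω hmem => hij (hω i hi j hj hmem.1 hmem.2)

namespace IsWalkLooped

variable {n : ℕ} {X : ℕ → Ω → Fin n}

theorem measure_cylinder (hX : IsWalkLooped μ X) (v : ℕ → Fin n) (t : ℕ) :
    μ {ω | ∀ s ≤ t, X s ω = v s} = μ {ω | X 0 ω = v 0} * (n : ENNReal)⁻¹ ^ t := by
  induction t with
  | zero => simp
  | succ t ih => rw [hX t v, ih, pow_succ, mul_assoc]

theorem measure_path_one_two_three [IsProbabilityMeasure μ] (hX : IsWalkLooped μ X)
    (hXm : ∀ t, Measurable (X t)) (a b c : Fin n) :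
    μ {ω | X 1 ω = a ∧ X 2 ω = b ∧ X 3 ω = c} = (n : ENNReal)⁻¹ ^ 3 := by
  have hfiber (a₀ : Fin n) : μ.restrict {ω | X 1 ω = a ∧ X 2 ω = b ∧ X 3 ω = c} (X 0 ⁻¹' {a₀}) =
      μ (X 0 ⁻¹' {a₀}) * (n : ENNReal)⁻¹ ^ 3 := by
    rw [Measure.restrict_apply (hXm 0 (measurableSet_singleton a₀))]
    convert hX.measure_cylinder (fun s => [a₀, a, b, c].getD s a₀) 3 using 2
    · ext ω
      simp only [Set.mem_inter_iff, Set.mem_preimage, Set.mem_singleton_iff, Set.mem_ofPred_eq]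
      constructor
      · rintro ⟨h0, h1, h2, h3⟩ s hs
        interval_cases s <;> assumption
      · intro h
        exact ⟨h 0 (by norm_num), h 1 (by norm_num), h 2 (by norm_num), h 3 le_rfl⟩
    · rfl
  have htotal : ∑ a₀ : Fin n, μ (X 0 ⁻¹' {a₀}) = 1 := by
    rw [sum_measure_preimage_singleton _ fun a₀ _ => hXm 0 (measurableSet_singleton a₀)]
    simp
  rw [← Measure.restrict_apply_univ, ← Set.preimage_univ (f := X 0), ← coe_univ,
    ← sum_measure_preimage_singleton _ fun a₀ _ => hXm 0 (measurableSet_singleton a₀)]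
  simp only [hfiber, ← sum_mul, htotal, one_mul]

theorem measure_path_one_two_three_mem [IsProbabilityMeasure μ] (hX : IsWalkLooped μ X)
    (hXm : ∀ t, Measurable (X t)) (S : Finset (Fin n × Fin n × Fin n)) :
    μ {ω | (X 1 ω, X 2 ω, X 3 ω) ∈ S} = #S * (n : ENNReal)⁻¹ ^ 3 := by
  have hY : Measurable fun ω => (X 1 ω, X 2 ω, X 3 ω) :=
    (hXm 1).prodMk ((hXm 2).prodMk (hXm 3))
  change μ ((fun ω => (X 1 ω, X 2 ω, X 3 ω)) ⁻¹' S) = _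
  rw [← sum_measure_preimage_singleton S fun p _ => hY (measurableSet_singleton p)]
  have hfiber (p : Fin n × Fin n × Fin n) :
      μ ((fun ω => (X 1 ω, X 2 ω, X 3 ω)) ⁻¹' {p}) = (n : ENNReal)⁻¹ ^ 3 := by
    convert hX.measure_path_one_two_three hXm p.1 p.2.1 p.2.2 using 2
    ext ω
    simp [Prod.ext_iff]
  simp only [hfiber, sum_const, nsmul_eq_mul]

theorem measure_backtracks [IsProbabilityMeasure μ] (hX : IsWalkLooped μ X)
    (hXm : ∀ t, Measurable (X t)) :
    μ {ω | Backtracks (X · ω) 1} = ↑(n * n - n) * (n : ENNReal)⁻¹ ^ 3 := by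
  have hinj : Injective fun p : Fin n × Fin n => (p.1, p.2, p.1) :=
    fun p q h => Prod.ext (congrArg (·.1) h) (congrArg (·.2.1) h)
  convert hX.measure_path_one_two_three_mem hXm
    (univ.offDiag.image fun p => (p.1, p.2, p.1)) using 2
  · ext ω
    simp only [Backtracks, ne_eq, Set.mem_ofPred_eq, mem_image, mem_offDiag, mem_univ, true_and,
      Prod.ext_iff, Prod.exists, existsAndEq, exists_eq_right_right]
    grind
  · simp [card_image_of_injective _ hinj, offDiag_card]

theorem measure_stays [IsProbabilityMeasure μ] (hX : IsWalkLooped μ X)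
    (hXm : ∀ t, Measurable (X t)) :
    μ {ω | X 3 ω = X 2 ω} = ↑(n * n) * (n : ENNReal)⁻¹ ^ 3 := by
  have hinj : Injective fun p : Fin n × Fin n => (p.1, p.2, p.2) :=
    fun p q h => Prod.ext (congrArg (·.1) h) (congrArg (·.2.1) h)
  convert hX.measure_path_one_two_three_mem hXm
    (univ.image fun p : Fin n × Fin n => (p.1, p.2, p.2)) using 2
  · ext ω
    simp [Prod.ext_iff, eq_comm]
  · simp [card_image_of_injective _ hinj]

end IsWalkLooped

theorem sum_measure_backtracks_le {n k : ℕ} (hk : k + 1 = n) {X : Fin k → ℕ → Ω → Fin n}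
    (hXm : ∀ j t, Measurable (X j t)) (hX : AvoidsAE μ X) {j₀ : Fin k} (hj₀ : ∀ l, j₀ ≤ l)
    (t : ℕ) :
    ∑ j ∈ univ.erase j₀, μ {ω | Backtracks (X j · ω) t} ≤
      μ {ω | X j₀ (t + 2) ω = X j₀ (t + 1) ω} := by
  have hfree : ∀ᵐ ω ∂μ, IsCollisionFree fun i t => X i t ω := hX
  refine sum_measure_le_of_ae_disjoint_of_ae_subset _ (fun j _ => ?_)
    (hfree.mono fun ω hω i _ j _ hi hj => hω.eq_of_backtracks hk hi hj)
    (hfree.mono fun ω hω j hj hb =>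
      hω.first_stays_of_backtracks hk hj₀ (ne_of_mem_erase hj) hb)
  exact (measurableSet_setOfPred.2 (((hXm j _).eq (hXm j _)).and
    ((hXm j _).eq (hXm j _)).not)).nullMeasurableSet

end Measure

/-- For every `n ≥ 4`, there is no avoidance coupling of `n - 1` walkers on
the looped complete graph `K_n^*`. -/
theorem no_avoidance_coupling_looped_n_sub_one (n : ℕ) (hn : 4 ≤ n) :
    ¬ AvoidanceCouplingLooped n (n - 1) := by
  rintro ⟨Ω, _, μ, X, _, hXm, hX, hav⟩
  have hk : n - 1 + 1 = n := by omega
  have hsum :=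
    sum_measure_backtracks_le hk hXm hav (j₀ := ⟨0, by omega⟩) (fun _ => Nat.zero_le _) 1
  simp only [Nat.reduceAdd, (hX _).measure_backtracks (hXm _), (hX _).measure_stays (hXm _),
    sum_const, card_erase_of_mem (mem_univ _), card_univ, Fintype.card_fin, nsmul_eq_mul,
    ← mul_assoc, ← Nat.cast_mul] at hsum
  have hpos : (n : ENNReal)⁻¹ ^ 3 ≠ 0 := by simp
  have hfin : (n : ENNReal)⁻¹ ^ 3 ≠ ⊤ := by simp [show n ≠ 0 by omega]
  rw [ENNReal.mul_le_mul_iff_left hpos hfin, Nat.cast_le, ← Nat.mul_sub_one] at hsum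
  obtain ⟨m, rfl⟩ : ∃ m, n = m + 4 := ⟨n - 4, by omega⟩
  rw [show m + 4 - 1 - 1 = m + 2 by omega, show m + 4 - 1 = m + 3 by omega] at hsum
  nlinarith
end
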